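/- arXiv:1704.07633 — 4 statements merged into one kernel-verified Lean document; each statement's English description precedes it below -/
import Mathlib

section
/- Let U ⊂ ℝ² be convex and open, let L ≥ 0, δ > 0, r ∈ (0,1], and let ζ : U → ℝ be Lipschitz with constant at most L, (1/r)-semiconvex, and a viscosity subsolution of ∂_t ζ + (1/2)(∂_x ζ)² ≤ −δ in U. Then for every z₀ = (t₀,x₀) ∈ U there exist v, w ∈ ℝ with √(v² + w²) ≤ L and v + w²/2 ≤ −δ such that ζ(t,x) ≥ ζ(t₀,x₀) + v (t − t₀) + w (x − x₀) − ((t − t₀)² + (x − x₀)²)/(2r) for all (t,x) ∈ U. -/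
/-!
For large `C`, the maximum of `ζ z - C |z - z₀|²` over a small ball around `z₀` is attained at an
interior point `z₁` with `|z₁ - z₀| ≤ L / C`. There the paraboloid is a smooth test function, so
its gradient `p = 2C (z₁ - z₀)` satisfies `p₁ + p₂² / 2 ≤ -δ`. The convex function
`ζ + |z|² / (2r)` is touched from above at `z₁` by a paraboloid, hence has a global supporting
plane there, which is the paraboloid lower bound at `z₁` with slope `p`; the Lipschitz bound then
forces `|p| ≤ L`. As `C → ∞`, `z₁ → z₀`, and a limit point of the slopes works at `z₀`.
-/

open MeasureTheory Set Filter Topology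

noncomputable section

/-- The `t`-partial derivative (coordinates on `ℝ²` are `z = (t, x)`). -/
def pdt (φ : ℝ × ℝ → ℝ) (z : ℝ × ℝ) : ℝ := fderiv ℝ φ z (1, 0)

/-- The `x`-partial derivative. -/
def pdx (φ : ℝ × ℝ → ℝ) (z : ℝ × ℝ) : ℝ := fderiv ℝ φ z (0, 1)

/-- `φ ∈ C_c^∞(Ω)`: a smooth compactly supported test function with support in `Ω`. -/
def IsTestFun (Ω : Set (ℝ × ℝ)) (φ : ℝ × ℝ → ℝ) : Prop :=
  ContDiff ℝ (⊤ : ℕ∞) φ ∧ HasCompactSupport φ ∧ tsupport φ ⊆ Ω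

/-- `u` is a weak solution of Burgers' equation `∂ₜ u + ∂ₓ (u²/2) = 0` on `Ω`. -/
def IsWeakBurgers (Ω : Set (ℝ × ℝ)) (u : ℝ × ℝ → ℝ) : Prop :=
  ∀ φ, IsTestFun Ω φ → ∫ z in Ω, (u z * pdt φ z + u z ^ 2 / 2 * pdx φ z) = 0

/-- The (finite) signed Radon measure `μ` on `Ω` is the quadratic entropy production
`μ = ∂ₜ(u²/2) + ∂ₓ(u³/3)` of `u`. -/
def IsEntropyProduction (Ω : Set (ℝ × ℝ)) (u : ℝ × ℝ → ℝ)
    (μ : MeasureTheory.SignedMeasure (ℝ × ℝ)) : Prop :=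
  μ.totalVariation Ωᶜ = 0 ∧
  ∀ φ, IsTestFun Ω φ →
    ∫ z in Ω, (u z ^ 2 / 2 * pdt φ z + u z ^ 3 / 3 * pdx φ z)
      = -((∫ z, φ z ∂μ.toJordanDecomposition.posPart)
          - ∫ z, φ z ∂μ.toJordanDecomposition.negPart)

/-- The square `Q_r(z) = (t-r,t+r) × (x-r,x+r)` for `z = (t,x)`. -/
def Qsq (z : ℝ × ℝ) (r : ℝ) : Set (ℝ × ℝ) :=
  Ioo (z.1 - r) (z.1 + r) ×ˢ Ioo (z.2 - r) (z.2 + r)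

/-- The set `Ω_{α,K}` of points where `|μ|(Q_r(z)) ≤ K r^{1+α}` for all
`r ∈ (0, min(d(z),1))`; here `d(z)` is the `ℓ^∞`-distance of `z` to `Ωᶜ`
(the product metric on `ℝ × ℝ` is the sup metric). -/
def OmegaAK (Ω : Set (ℝ × ℝ)) (μ : MeasureTheory.SignedMeasure (ℝ × ℝ)) (α K : ℝ) :
    Set (ℝ × ℝ) :=
  {z | z ∈ Ω ∧ ∀ r : ℝ, 0 < r → r < min (Metric.infDist z Ωᶜ) 1 →
    μ.totalVariation (Qsq z r) ≤ ENNReal.ofReal (K * r ^ (1 + α))}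

/-- Squared Euclidean norm `|z|² = t² + x²` on `ℝ²`. -/
def sqnorm (z : ℝ × ℝ) : ℝ := z.1 ^ 2 + z.2 ^ 2

/-- `f` is `L`-Lipschitz on `U` with respect to the Euclidean norm on `ℝ²`. -/
def EuclLipOnWith (L : ℝ) (f : ℝ × ℝ → ℝ) (U : Set (ℝ × ℝ)) : Prop :=
  ∀ z ∈ U, ∀ z' ∈ U, |f z - f z'| ≤ L * Real.sqrt (sqnorm (z - z'))

/-- Closed Euclidean ball of radius `ρ` centered at `z₀`. -/
def closedBallE (z₀ : ℝ × ℝ) (ρ : ℝ) : Set (ℝ × ℝ) := {z | sqnorm (z - z₀) ≤ ρ ^ 2}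

/-- Open Euclidean ball of radius `ρ` centered at `z₀`. -/
def ballE (z₀ : ℝ × ℝ) (ρ : ℝ) : Set (ℝ × ℝ) := {z | sqnorm (z - z₀) < ρ ^ 2}

/-- `ζ` is a viscosity subsolution of `∂ₜζ + (1/2)(∂ₓζ)² ≤ c` in `U`. -/
def ViscSubsolOn (U : Set (ℝ × ℝ)) (ζ : ℝ × ℝ → ℝ) (c : ℝ) : Prop :=
  ∀ φ : ℝ × ℝ → ℝ, ContDiff ℝ (⊤ : ℕ∞) φ →
    ∀ z₀ ∈ U, IsLocalMax (fun z => ζ z - φ z) z₀ →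
      pdt φ z₀ + (pdx φ z₀) ^ 2 / 2 ≤ c

/-- `ζ` is `(1/r)`-semiconvex on `U`: `z ↦ ζ(z) + |z|²/(2r)` is convex. -/
def SemiconvexOn (U : Set (ℝ × ℝ)) (r : ℝ) (ζ : ℝ × ℝ → ℝ) : Prop :=
  ConvexOn ℝ U (fun z => ζ z + sqnorm z / (2 * r))

theorem ConvexOn.isMinOn_of_eventually_le_add_sq_norm {E : Type*} [NormedAddCommGroup E]
    [NormedSpace ℝ E] {U : Set E} {h : E → ℝ} {x : E} {M : ℝ} (hh : ConvexOn ℝ U h)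
    (hU : U ∈ 𝓝 x) (hloc : ∀ᶠ y in 𝓝 x, h y ≤ h x + M * ‖y - x‖ ^ 2) : IsMinOn h U x := by
  intro y hy
  have hx : x ∈ U := mem_of_mem_nhds hU
  set d := y - x
  have hline : Tendsto (fun t : ℝ => x - t • d) (𝓝[>] 0) (𝓝 x) :=
    tendsto_nhdsWithin_of_tendsto_nhds <|
      (continuous_const.sub (continuous_id.smul continuous_const)).tendsto' 0 x (by simp)
  have hev : ∀ᶠ t in 𝓝[>] (0 : ℝ), h x ≤ h y + M * ‖d‖ ^ 2 * t := by
    filter_upwards [hline.eventually hU, hline.eventually hloc, Ioo_mem_nhdsGT one_pos]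
      with t hback hback_le ht
    have hfwd : x + t • d ∈ U := hh.1.add_smul_sub_mem hx hy ⟨ht.1.le, ht.2.le⟩
    have hseg : h (x + t • d) ≤ (1 - t) * h x + t * h y := by
      simpa [d, smul_sub, sub_smul, add_sub, add_comm] using
        hh.2 hx hy (sub_nonneg.2 ht.2.le) ht.1.le (sub_add_cancel 1 t)
    -- midpoint convexity turns the upper bound at `x - t • d` into a lower bound at `x + t • d`
    have hmid : h x ≤ (1 / 2) * h (x + t • d) + (1 / 2) * h (x - t • d) := by
      have := hh.2 hfwd hback (by norm_num : (0 : ℝ) ≤ 1 / 2) (by norm_num : (0 : ℝ) ≤ 1 / 2)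
        (by norm_num)
      rwa [show (1 / 2 : ℝ) • (x + t • d) + (1 / 2 : ℝ) • (x - t • d) = x by module] at this
    rw [sub_sub_cancel_left, norm_neg, norm_smul, Real.norm_of_nonneg ht.1.le] at hback_le
    have : t * h x ≤ t * (h y + M * ‖d‖ ^ 2 * t) := by nlinarith
    exact le_of_mul_le_mul_left this ht.1
  refine ge_of_tendsto ?_ hev
  exact tendsto_nhdsWithin_of_tendsto_nhds <|
    (continuous_const.add (continuous_const.mul continuous_id)).tendsto' 0 _ (by simp)

lemma sqnorm_smul (a : ℝ) (z : ℝ × ℝ) : sqnorm (a • z) = a ^ 2 * sqnorm z := by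
  simp only [sqnorm, Prod.smul_fst, Prod.smul_snd, smul_eq_mul]; ring

lemma norm_le_sqrt_sqnorm (z : ℝ × ℝ) : ‖z‖ ≤ √(sqnorm z) :=
  Real.le_sqrt_of_sq_le <| by
    rw [Prod.norm_def, sqnorm, max_def]
    split_ifs <;> simp only [Real.norm_eq_abs, sq_abs] <;> nlinarith

lemma sqnorm_le_two_mul_norm_sq (z : ℝ × ℝ) : sqnorm z ≤ 2 * ‖z‖ ^ 2 := by
  have h1 : |z.1| ≤ ‖z‖ := norm_fst_le z
  have h2 : |z.2| ≤ ‖z‖ := norm_snd_le z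
  rw [sqnorm, ← sq_abs z.1, ← sq_abs z.2]
  nlinarith [abs_nonneg z.1, abs_nonneg z.2]

lemma isCompact_setOf_sqrt_sqnorm_le (L : ℝ) : IsCompact {p : ℝ × ℝ | √(sqnorm p) ≤ L} :=
  Metric.isCompact_of_isClosed_isBounded
    (isClosed_le (by unfold sqnorm; fun_prop) continuous_const)
    ((Metric.isBounded_closedBall (x := 0) (r := L)).subset fun p hp => by
      simpa using (norm_le_sqrt_sqnorm p).trans hp)

lemma EuclLipOnWith.continuousOn {L : ℝ} {f : ℝ × ℝ → ℝ} {U : Set (ℝ × ℝ)}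
    (hL : 0 ≤ L) (hf : EuclLipOnWith L f U) : ContinuousOn f U := by
  refine (LipschitzOnWith.of_dist_le_mul (K := (L * √2).toNNReal)
    fun z hz z' hz' => ?_).continuousOn
  rw [Real.coe_toNNReal _ (by positivity), Real.dist_eq, dist_eq_norm, mul_assoc]
  refine (hf z hz z' hz').trans (mul_le_mul_of_nonneg_left ?_ hL)
  calc √(sqnorm (z - z')) ≤ √(2 * ‖z - z'‖ ^ 2) :=
        Real.sqrt_le_sqrt (sqnorm_le_two_mul_norm_sq _)
    _ = √2 * ‖z - z'‖ := by rw [Real.sqrt_mul zero_le_two, Real.sqrt_sq (norm_nonneg _)]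

lemma hasFDerivAt_sqnorm_sub (z₀ z : ℝ × ℝ) :
    HasFDerivAt (fun z => sqnorm (z - z₀))
      ((2 * (z.1 - z₀.1)) • ContinuousLinearMap.fst ℝ ℝ ℝ
        + (2 * (z.2 - z₀.2)) • ContinuousLinearMap.snd ℝ ℝ ℝ) z := by
  have h1 := ((hasFDerivAt_fst (𝕜 := ℝ) (p := z)).sub_const z₀.1).pow 2
  have h2 := ((hasFDerivAt_snd (𝕜 := ℝ) (p := z)).sub_const z₀.2).pow 2
  exact (h1.add h2).congr_fderiv (by ext <;> simp)

def IsProxSubgradient (U : Set (ℝ × ℝ)) (r : ℝ) (ζ : ℝ × ℝ → ℝ) (z₁ p : ℝ × ℝ) : Prop :=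
  ∀ z ∈ U, ζ z₁ + p.1 * (z.1 - z₁.1) + p.2 * (z.2 - z₁.2) - sqnorm (z - z₁) / (2 * r) ≤ ζ z

section

variable {U : Set (ℝ × ℝ)} {r : ℝ} {ζ : ℝ × ℝ → ℝ} {z₀ z₁ p : ℝ × ℝ} {C : ℝ}

/-- Adding `|z|² / (2r)` and subtracting a plane turns `ζ` into a convex function that is
locally bounded above by a quadratic at `z₁`, hence minimal there on all of `U`. -/
lemma SemiconvexOn.isProxSubgradient_of_eventually_le (hsc : SemiconvexOn U r ζ) (hr : 0 < r)
    (hU : U ∈ 𝓝 z₁) {M : ℝ} (hM : 0 ≤ M)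
    (hloc : ∀ᶠ z in 𝓝 z₁,
      ζ z ≤ ζ z₁ + p.1 * (z.1 - z₁.1) + p.2 * (z.2 - z₁.2) + M * sqnorm (z - z₁)) :
    IsProxSubgradient U r ζ z₁ p := by
  set ℓ : ℝ × ℝ →ₗ[ℝ] ℝ := (p.1 + z₁.1 / r) • LinearMap.fst ℝ ℝ ℝ
    + (p.2 + z₁.2 / r) • LinearMap.snd ℝ ℝ ℝ
  set h := (fun z => ζ z + sqnorm z / (2 * r)) - ℓ
  have hh : ConvexOn ℝ U h := hsc.sub (ℓ.concaveOn hsc.1)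
  have hdiff : ∀ z, h z - h z₁ = ζ z - ζ z₁ - p.1 * (z.1 - z₁.1) - p.2 * (z.2 - z₁.2)
      + sqnorm (z - z₁) / (2 * r) := fun z => by
    simp only [h, ℓ, sqnorm, Pi.sub_apply, LinearMap.add_apply, LinearMap.smul_apply,
      LinearMap.fst_apply, LinearMap.snd_apply, smul_eq_mul, Prod.fst_sub, Prod.snd_sub]
    field_simp
    ring
  have hmin : IsMinOn h U z₁ := by
    refine hh.isMinOn_of_eventually_le_add_sq_norm hU (M := 2 * (M + 1 / (2 * r))) ?_
    filter_upwards [hloc] with z hz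
    have hcoef : 0 ≤ M + 1 / (2 * r) := by positivity
    have hdiv : sqnorm (z - z₁) / (2 * r) = 1 / (2 * r) * sqnorm (z - z₁) := by ring
    nlinarith [hdiff z, mul_le_mul_of_nonneg_left (sqnorm_le_two_mul_norm_sq (z - z₁)) hcoef]
  intro z hz
  linarith [hdiff z, isMinOn_iff.1 hmin z hz]

/-- Move from `z₁` a distance `s` in the direction `p`: the paraboloid forces `ζ` to grow at rate
`|p|` to first order, which the Lipschitz bound caps at `L`. -/
lemma IsProxSubgradient.sqrt_sqnorm_le (hp : IsProxSubgradient U r ζ z₁ p) (hU : U ∈ 𝓝 z₁)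
    {L : ℝ} (hL : 0 ≤ L) (hζL : EuclLipOnWith L ζ U) : √(sqnorm p) ≤ L := by
  set N := √(sqnorm p)
  have hN : 0 ≤ N := Real.sqrt_nonneg _
  have hNsq : N ^ 2 = sqnorm p := Real.sq_sqrt (by unfold sqnorm; positivity)
  have hray : Tendsto (fun s : ℝ => z₁ + s • p) (𝓝[>] 0) (𝓝 z₁) :=
    tendsto_nhdsWithin_of_tendsto_nhds <|
      (continuous_const.add (continuous_id.smul continuous_const)).tendsto' 0 z₁ (by simp)
  have hev : ∀ᶠ s in 𝓝[>] (0 : ℝ), N ^ 2 - N ^ 2 / (2 * r) * s ≤ L * N := by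
    filter_upwards [hray.eventually hU, self_mem_nhdsWithin] with s hs (hs0 : 0 < s)
    have hlow := hp _ hs
    have hup := (le_abs_self _).trans (hζL _ hs z₁ (mem_of_mem_nhds hU))
    simp only [add_sub_cancel_left, Prod.fst_add, Prod.snd_add, Prod.smul_fst, Prod.smul_snd,
      smul_eq_mul, sqnorm_smul] at hlow hup
    rw [Real.sqrt_mul (sq_nonneg s), Real.sqrt_sq hs0.le] at hup
    have : s * (N ^ 2 - N ^ 2 / (2 * r) * s) ≤ s * (L * N) := by
      have e : s * (N ^ 2 - N ^ 2 / (2 * r) * s)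
          = p.1 * (s * p.1) + p.2 * (s * p.2) - s ^ 2 * sqnorm p / (2 * r) := by
        rw [hNsq, sqnorm]; ring
      linarith
    exact le_of_mul_le_mul_left this hs0
  have hlim : N ^ 2 ≤ L * N := le_of_tendsto (tendsto_nhdsWithin_of_tendsto_nhds <|
    (continuous_const.sub (continuous_const.mul continuous_id)).tendsto' 0 _ (by simp)) hev
  nlinarith

lemma ViscSubsolOn.le_of_isLocalMax_sub_penalty {c : ℝ} (hsub : ViscSubsolOn U ζ c)
    (hz₁ : z₁ ∈ U) (hmax : IsLocalMax (fun z => ζ z - C * sqnorm (z - z₀)) z₁) :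
    ((2 * C) • (z₁ - z₀)).1 + ((2 * C) • (z₁ - z₀)).2 ^ 2 / 2 ≤ c := by
  have hφ := (hasFDerivAt_sqnorm_sub z₀ z₁).const_mul C
  have hsmooth : ContDiff ℝ (⊤ : ℕ∞) fun z => C * sqnorm (z - z₀) := by unfold sqnorm; fun_prop
  have := hsub _ hsmooth z₁ hz₁ hmax
  simp only [pdt, pdx, hφ.fderiv, smul_add, add_apply, smul_apply,
    ContinuousLinearMap.coe_fst', ContinuousLinearMap.coe_snd', smul_eq_mul, mul_one, mul_zero,
    add_zero, zero_add] at this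
  simp only [Prod.smul_fst, Prod.smul_snd, Prod.fst_sub, Prod.snd_sub, smul_eq_mul]
  convert this using 2 <;> ring

lemma SemiconvexOn.isProxSubgradient_of_isLocalMax_sub_penalty (hsc : SemiconvexOn U r ζ)
    (hr : 0 < r) (hU : U ∈ 𝓝 z₁) (hC : 0 ≤ C)
    (hmax : IsLocalMax (fun z => ζ z - C * sqnorm (z - z₀)) z₁) :
    IsProxSubgradient U r ζ z₁ ((2 * C) • (z₁ - z₀)) := by
  refine hsc.isProxSubgradient_of_eventually_le hr hU hC ?_
  filter_upwards [hmax] with z (hz : ζ z - C * sqnorm (z - z₀) ≤ ζ z₁ - C * sqnorm (z₁ - z₀))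
  simp only [sqnorm, Prod.smul_fst, Prod.smul_snd, Prod.fst_sub, Prod.snd_sub,
    smul_eq_mul] at hz ⊢
  linear_combination hz

lemma exists_isLocalMax_sub_penalty {L ρ : ℝ} (hL : 0 ≤ L) (hζL : EuclLipOnWith L ζ U)
    (hρ : 0 < ρ) (hball : Metric.closedBall z₀ ρ ⊆ U) :
    ∃ z₁ ∈ Metric.ball z₀ ρ, IsLocalMax (fun z => ζ z - (L + 1) / ρ * sqnorm (z - z₀)) z₁ := by
  set C := (L + 1) / ρ
  have hcont : ContinuousOn (fun z => ζ z - C * sqnorm (z - z₀)) (Metric.closedBall z₀ ρ) :=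
    ((hζL.continuousOn hL).mono hball).sub (by unfold sqnorm; fun_prop)
  obtain ⟨z₁, hz₁B, hmax⟩ := (isCompact_closedBall z₀ ρ).exists_isMaxOn
    ⟨z₀, Metric.mem_closedBall_self hρ.le⟩ hcont
  set s := √(sqnorm (z₁ - z₀))
  have hs : s ^ 2 = sqnorm (z₁ - z₀) := Real.sq_sqrt (by unfold sqnorm; positivity)
  have hpen : C * s ^ 2 ≤ L * s := by
    have h₀ := isMaxOn_iff.1 hmax z₀ (Metric.mem_closedBall_self hρ.le)
    have hlip := (le_abs_self _).trans
      (hζL z₁ (hball hz₁B) z₀ (hball (Metric.mem_closedBall_self hρ.le)))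
    have hzero : sqnorm (z₀ - z₀) = 0 := by simp [sqnorm]
    change _ ≤ L * s at hlip
    rw [hzero, mul_zero, sub_zero] at h₀
    rw [hs]
    linarith
  have hz₁ : z₁ ∈ Metric.ball z₀ ρ := by
    -- `C ρ = L + 1 > L` is what keeps the maximum point off the boundary sphere
    have hsρ : s < ρ := by
      by_contra! h
      have hCρ : C * ρ = L + 1 := div_mul_cancel₀ _ hρ.ne'
      have hC : 0 < C := by positivity
      nlinarith [mul_le_mul_of_nonneg_left h (mul_nonneg hC.le (hρ.le.trans h))]
    exact (norm_le_sqrt_sqnorm _).trans_lt hsρ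
  exact ⟨z₁, hz₁, hmax.isLocalMax <| mem_of_superset (Metric.isOpen_ball.mem_nhds hz₁)
    Metric.ball_subset_closedBall⟩

lemma exists_isProxSubgradient_of_mem_closure {K : Set (ℝ × ℝ)} (hK : IsCompact K)
    (hcont : ContinuousOn ζ U) (hz₀ : z₀ ∈ U)
    (hcl : z₀ ∈ closure {z | z ∈ U ∧ ∃ p ∈ K, IsProxSubgradient U r ζ z p}) :
    ∃ p ∈ K, IsProxSubgradient U r ζ z₀ p := by
  obtain ⟨z, hz, hzlim⟩ := mem_closure_iff_seq_limit.1 hcl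
  choose hzU p hpK hp using hz
  obtain ⟨q, hqK, φ, hφ, hpq⟩ := hK.tendsto_subseq hpK
  refine ⟨q, hqK, fun y hy => le_of_tendsto (x := atTop) ?_
    (Eventually.of_forall fun n => hp (φ n) y hy)⟩
  have hzφ := hzlim.comp hφ.tendsto_atTop
  have hζ : Tendsto (fun n => ζ (z (φ n))) atTop (𝓝 (ζ z₀)) :=
    (hcont z₀ hz₀).tendsto.comp
      (tendsto_nhdsWithin_iff.2 ⟨hzφ, Eventually.of_forall fun n => hzU _⟩)
  have hsq : Continuous sqnorm := by unfold sqnorm; fun_prop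
  exact ((hζ.add (hpq.fst_nhds.mul (tendsto_const_nhds.sub hzφ.fst_nhds))).add
    (hpq.snd_nhds.mul (tendsto_const_nhds.sub hzφ.snd_nhds))).sub
    (((hsq.tendsto _).comp (tendsto_const_nhds.sub hzφ)).div_const _)

lemma exists_isProxSubgradient_near {L ρ c : ℝ} (hUo : IsOpen U) (hL : 0 ≤ L)
    (hζL : EuclLipOnWith L ζ U) (hr : 0 < r) (hsc : SemiconvexOn U r ζ)
    (hsub : ViscSubsolOn U ζ c) (hρ : 0 < ρ) (hball : Metric.closedBall z₀ ρ ⊆ U) :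
    ∃ z₁ ∈ Metric.ball z₀ ρ, ∃ p : ℝ × ℝ, (√(sqnorm p) ≤ L ∧ p.1 + p.2 ^ 2 / 2 ≤ c) ∧
      IsProxSubgradient U r ζ z₁ p := by
  obtain ⟨z₁, hz₁, hmax⟩ := exists_isLocalMax_sub_penalty hL hζL hρ hball
  have hU : U ∈ 𝓝 z₁ := hUo.mem_nhds (hball (Metric.ball_subset_closedBall hz₁))
  have hp := hsc.isProxSubgradient_of_isLocalMax_sub_penalty hr hU (by positivity) hmax
  exact ⟨z₁, hz₁, _, ⟨hp.sqrt_sqnorm_le hU hL hζL,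
    hsub.le_of_isLocalMax_sub_penalty (mem_of_mem_nhds hU) hmax⟩, hp⟩

end

theorem stmt6_general (U : Set (ℝ × ℝ)) (hUo : IsOpen U)
    (L δ r : ℝ) (hL : 0 ≤ L) (hr : 0 < r)
    (ζ : ℝ × ℝ → ℝ) (hζL : EuclLipOnWith L ζ U) (hsc : SemiconvexOn U r ζ)
    (hsub : ViscSubsolOn U ζ (-δ)) :
    ∀ z₀ ∈ U, ∃ v w : ℝ, Real.sqrt (v ^ 2 + w ^ 2) ≤ L ∧ v + w ^ 2 / 2 ≤ -δ ∧
      ∀ z ∈ U, ζ z₀ + v * (z.1 - z₀.1) + w * (z.2 - z₀.2)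
        - ((z.1 - z₀.1) ^ 2 + (z.2 - z₀.2) ^ 2) / (2 * r) ≤ ζ z := by
  intro z₀ hz₀
  set K := {p : ℝ × ℝ | √(sqnorm p) ≤ L} ∩ {p | p.1 + p.2 ^ 2 / 2 ≤ -δ}
  have hK : IsCompact K := (isCompact_setOf_sqrt_sqnorm_le L).inter_right
    (isClosed_le (by fun_prop) continuous_const)
  have hcl : z₀ ∈ closure {z | z ∈ U ∧ ∃ p ∈ K, IsProxSubgradient U r ζ z p} := by
    refine Metric.mem_closure_iff.2 fun ε hε => ?_
    obtain ⟨ρ, hρ, hρU⟩ := Metric.nhds_basis_closedBall.mem_iff.1 (hUo.mem_nhds hz₀)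
    have hball := (Metric.closedBall_subset_closedBall (min_le_right ε ρ)).trans hρU
    obtain ⟨z₁, hz₁, hp⟩ :=
      exists_isProxSubgradient_near hUo hL hζL hr hsc hsub (lt_min hε hρ) hball
    refine ⟨z₁, ⟨hball (Metric.ball_subset_closedBall hz₁), hp⟩, ?_⟩
    rw [dist_comm]
    exact (Metric.mem_ball.1 hz₁).trans_le (min_le_left _ _)
  obtain ⟨p, ⟨hpL, hpH⟩, hp⟩ :=
    exists_isProxSubgradient_of_mem_closure hK (hζL.continuousOn hL) hz₀ hcl
  exact ⟨p.1, p.2, hpL, hpH, hp⟩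

/-- **Step 1 of the maximum-principle lemma: affine supporting subsolutions.** -/
theorem stmt6 (U : Set (ℝ × ℝ)) (hU : Convex ℝ U) (hUo : IsOpen U)
    (L δ r : ℝ) (hL : 0 ≤ L) (hδ : 0 < δ) (hr : 0 < r) (hr1 : r ≤ 1)
    (ζ : ℝ × ℝ → ℝ) (hζL : EuclLipOnWith L ζ U) (hsc : SemiconvexOn U r ζ)
    (hsub : ViscSubsolOn U ζ (-δ)) :
    ∀ z₀ ∈ U, ∃ v w : ℝ, Real.sqrt (v ^ 2 + w ^ 2) ≤ L ∧ v + w ^ 2 / 2 ≤ -δ ∧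
      ∀ z ∈ U, ζ z₀ + v * (z.1 - z₀.1) + w * (z.2 - z₀.2)
        - ((z.1 - z₀.1) ^ 2 + (z.2 - z₀.2) ^ 2) / (2 * r) ≤ ζ z :=
  stmt6_general U hUo L δ r hL hr ζ hζL hsc hsub
end
end

section
/- There is a universal constant c > 0 with the following property. Let δ, r ∈ (0,1], ρ ≥ δ² r, and let B_ρ denote the Euclidean ball of radius ρ centered at the origin of ℝ². Let h : B_ρ → ℝ be 1-Lipschitz with h(0,0) = 0, let ζ_a(t,x) = v t + w x be affine with √(v² + w²) ≤ 1, and assume h(z) ≥ ζ_a(z) − |z|²/(2r) for all z ∈ B_ρ. Define ζ̃(t,x) := ζ_a(t,x) − (1+δ)(t² + x²)/(2r) and, for η > 0, Ω_η := B_ρ ∩ { ζ̃ + η ≥ h }. Then for every η ∈ (0, c δ⁵ r) one has B_{η/3} ⊂ Ω_η ⊂ B_{2 (r η / δ)^{1/2}}, and the ball B_{2 (r η / δ)^{1/2}} is compactly contained in B_ρ. -/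
open MeasureTheory Set Filter Topology

noncomputable section

/-- `ζ̃(t,x) = v t + w x − (1+δ)(t² + x²)/(2r)`. -/
def tildeZeta (v w δ r : ℝ) (z : ℝ × ℝ) : ℝ :=
  v * z.1 + w * z.2 - (1 + δ) * sqnorm z / (2 * r)

/-- `Ω_η = B_ρ ∩ { ζ̃ + η ≥ h }`. -/
def OmegaEta (v w δ r ρ η : ℝ) (h : ℝ × ℝ → ℝ) : Set (ℝ × ℝ) :=
  closedBallE 0 ρ ∩ {z | h z ≤ tildeZeta v w δ r z + η}

lemma cs_aux (a b c d s : ℝ) (h1 : a ^ 2 + b ^ 2 ≤ 1) (h2 : s ^ 2 = c ^ 2 + d ^ 2)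
    (h3 : 0 ≤ s) : -s ≤ a * c + b * d := by
  nlinarith [sq_nonneg (a * d - b * c), sq_nonneg (a * c + b * d + s)]

lemma key_aux (s η r δ : ℝ) (hr : 0 < r) (hη : 0 < η) (hδ1 : δ ≤ 1)
    (hs : s < η / 3) (hsnn : 0 ≤ s) (hηr : η < r / 4) :
    (1 + δ) * s ^ 2 ≤ (η - 2 * s) * (2 * r) := by
  nlinarith [mul_pos hr hη, sq_nonneg s, mul_lt_mul_of_pos_left hs hr,
    mul_lt_mul_of_pos_left hηr hη]

set_option maxHeartbeats 1000000 in
/-- **Step 2 of the maximum-principle lemma: localization of `Ω_η`.** -/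
theorem stmt7 :
    ∃ c > 0, ∀ (δ r ρ : ℝ), 0 < δ → δ ≤ 1 → 0 < r → r ≤ 1 → δ ^ 2 * r ≤ ρ →
      ∀ (h : ℝ × ℝ → ℝ) (v w : ℝ),
        EuclLipOnWith 1 h (closedBallE 0 ρ) → h 0 = 0 →
        Real.sqrt (v ^ 2 + w ^ 2) ≤ 1 →
        (∀ z ∈ closedBallE 0 ρ, v * z.1 + w * z.2 - sqnorm z / (2 * r) ≤ h z) →
        ∀ η : ℝ, 0 < η → η < c * δ ^ 5 * r →
          ballE 0 (η / 3) ⊆ OmegaEta v w δ r ρ η h ∧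
          OmegaEta v w δ r ρ η h ⊆ closedBallE 0 (2 * Real.sqrt (r * η / δ)) ∧
          2 * Real.sqrt (r * η / δ) < ρ := by
  refine ⟨1/4, by norm_num, ?_⟩
  intro δ r ρ hδ hδ1 hr hr1 hρ h v w hLip h0 hvw hlow η hη hηc
  have hδ3 : δ ^ 3 ≤ 1 := pow_le_one₀ hδ.le hδ1
  have hδ5 : δ ^ 5 ≤ 1 := pow_le_one₀ hδ.le hδ1
  have hρpos : 0 < ρ := lt_of_lt_of_le (by positivity) hρ
  have hηr : η < r / 4 := by nlinarith
  have h55 : δ ^ 5 * r ≤ δ ^ 2 * r := by nlinarith [pow_pos hδ 2, mul_pos (pow_pos hδ 2) hr]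
  have hηρ : η < ρ := by nlinarith
  have h2r : (0:ℝ) < 2 * r := by positivity
  refine ⟨?_, ?_, ?_⟩
  · -- B_{η/3} ⊆ Ω_η
    intro z hz
    have hz' : sqnorm z < (η / 3) ^ 2 := by simpa [ballE, sqnorm] using hz
    set s := Real.sqrt (sqnorm z) with hsdef
    have hsnn : 0 ≤ s := Real.sqrt_nonneg _
    have hsq : 0 ≤ sqnorm z := by simp only [sqnorm]; positivity
    have hs2 : s ^ 2 = sqnorm z := Real.sq_sqrt hsq
    have hs2' : s ^ 2 = z.1 ^ 2 + z.2 ^ 2 := hs2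
    have hs : s < η / 3 := (Real.sqrt_lt' (by positivity)).mpr hz'
    have hzball : z ∈ closedBallE 0 ρ := by
      have : sqnorm z ≤ ρ ^ 2 := by nlinarith
      simpa [closedBallE, sqnorm] using this
    have h0ball : (0 : ℝ × ℝ) ∈ closedBallE 0 ρ := by
      simp only [closedBallE, Set.mem_setOf_eq, sub_zero, sqnorm]
      norm_num
      positivity
    refine ⟨hzball, ?_⟩
    have hlip := hLip z hzball 0 h0ball
    rw [h0, sub_zero, sub_zero, one_mul] at hlip
    have hhz : h z ≤ s := (abs_le.mp hlip).2
    have hvw2 : v ^ 2 + w ^ 2 ≤ 1 := by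
      nlinarith [Real.sq_sqrt (show (0:ℝ) ≤ v ^ 2 + w ^ 2 by positivity),
        Real.sqrt_nonneg (v ^ 2 + w ^ 2)]
    have hcs : -s ≤ v * z.1 + w * z.2 := cs_aux v w z.1 z.2 s hvw2 hs2' hsnn
    show h z ≤ tildeZeta v w δ r z + η
    rw [tildeZeta, ← hs2]
    have key : (1 + δ) * s ^ 2 ≤ (η - 2 * s) * (2 * r) :=
      key_aux s η r δ hr hη hδ1 hs hsnn hηr
    have hdiv : (1 + δ) * s ^ 2 / (2 * r) ≤ η - 2 * s := (div_le_iff₀ h2r).mpr key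
    linarith
  · -- Ω_η ⊆ B_{2√(rη/δ)}
    rintro z ⟨hz1, hz2⟩
    have hlb := hlow z hz1
    rw [Set.mem_setOf_eq, tildeZeta] at hz2
    have h3 : δ * sqnorm z / (2 * r) ≤ η := by
      have heq : δ * sqnorm z / (2 * r)
          = (1 + δ) * sqnorm z / (2 * r) - sqnorm z / (2 * r) := by ring
      rw [heq]; linarith
    have hsqle : δ * sqnorm z ≤ η * (2 * r) := (div_le_iff₀ h2r).mp h3
    show sqnorm (z - 0) ≤ (2 * Real.sqrt (r * η / δ)) ^ 2
    rw [sub_zero]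
    have heq : (2 * Real.sqrt (r * η / δ)) ^ 2 = 4 * (r * η) / δ := by
      rw [mul_pow, Real.sq_sqrt (by positivity : (0:ℝ) ≤ r * η / δ)]; ring
    rw [heq, le_div_iff₀ hδ]
    nlinarith [mul_pos hr hη]
  · -- 2√(rη/δ) < ρ
    have hlt : Real.sqrt (r * η / δ) < δ ^ 2 * r / 2 := by
      rw [Real.sqrt_lt' (by positivity)]
      rw [div_lt_iff₀ hδ]
      nlinarith [mul_lt_mul_of_pos_left hηc hr]
    linarith
end
end

section
/- Let u be a bounded weak solution of Burgers' equation on an open set Ω ⊂ ℝ² containing the closed square [−2r, 2r]², and let η ∈ C_c^∞((−1,1)) with ∫ η = 1; set η_r(x) := r^{−1} η(x/r). Then there is a constant C > 0 depending only on ‖u‖_{L^∞} and η such that ⨍_{|s| ≤ r} ⨍_{|t| ≤ r} | ∫ (u(s,x) − u(t,x)) η_r(x) dx | ds dt ≤ C D(r), where D(r) := ⨍_{|t| ≤ r} ⨍_{|x| ≤ r} ⨍_{|y| ≤ r} |u(t,x) − u(t,y)| dx dy dt. -/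
open MeasureTheory Set Filter Topology

noncomputable section

/-!
Testing the equation with `ψ(t) η_r(x)` shows that the weighted mean `F(t) = ∫ u(t,x) η_r(x) dx`
has weak derivative `G(t) = ∫ u(t,x)²/2 η_r'(x) dx` on `(-2r, 2r)`. By the du Bois-Reymond lemma,
`F(s) - F(t) = ∫_t^s G` for a.e. `s, t`, so the left-hand side is at most `∫_{-r}^r |G|`.
Since `∫ η_r' = 0`, in `G(τ)` one may replace `u²/2` by its deviation from its mean over
`[-r, r]`; with `|a²/2 - b²/2| ≤ M |a - b|` and `|η_r'| ≤ ‖η'‖∞ / r²` this bounds `|G(τ)|` by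
`2 M ‖η'‖∞ / r` times the mean oscillation of `u(τ, ·)` on `[-r, r]`, and integrating in `τ`
gives the claim with `C = 4 M ‖η'‖∞` (plus one, to make it positive).
-/

theorem abs_sq_div_two_le {a M : ℝ} (ha : |a| ≤ M) : |a ^ 2 / 2| ≤ M ^ 2 / 2 := by
  rw [abs_div, abs_pow, abs_two]
  gcongr

theorem abs_sq_div_two_sub_le {a b M : ℝ} (ha : |a| ≤ M) (hb : |b| ≤ M) :
    |a ^ 2 / 2 - b ^ 2 / 2| ≤ M * |a - b| := by
  have hab : |a + b| / 2 ≤ M := by linarith [abs_add_le a b]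
  calc |a ^ 2 / 2 - b ^ 2 / 2| = |a + b| / 2 * |a - b| := by
        rw [show a ^ 2 / 2 - b ^ 2 / 2 = (a + b) / 2 * (a - b) by ring, abs_mul, abs_div,
          abs_two]
    _ ≤ M * |a - b| := by gcongr

namespace MeasureTheory

variable {α : Type*} [MeasurableSpace α] {μ : Measure α}

theorem Integrable.mul_of_abs_le_of_ne_zero {f g : α → ℝ} (hg : Integrable g μ)
    (hf : AEStronglyMeasurable f μ) {M : ℝ} (hfM : ∀ x, g x ≠ 0 → |f x| ≤ M) :
    Integrable (fun x => f x * g x) μ := by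
  refine (hg.norm.const_mul M).mono' (hf.mul hg.1) (ae_of_all _ fun x => ?_)
  rcases eq_or_ne (g x) 0 with hx | hx
  · simp [hx]
  · rw [norm_mul, Real.norm_eq_abs, Real.norm_eq_abs]
    exact mul_le_mul_of_nonneg_right (hfM x hx) (abs_nonneg _)

theorem abs_integral_mul_le_of_abs_le_of_ne_zero {f g : α → ℝ} (hg : Integrable g μ)
    {M : ℝ} (hfM : ∀ x, g x ≠ 0 → |f x| ≤ M) :
    |∫ x, f x * g x ∂μ| ≤ M * ∫ x, |g x| ∂μ := by
  rw [← integral_const_mul]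
  refine abs_integral_le_integral_abs.trans
    (integral_mono_of_nonneg (ae_of_all _ fun _ => abs_nonneg _) (hg.abs.const_mul M)
      (ae_of_all _ fun x => ?_))
  rcases eq_or_ne (g x) 0 with hx | hx
  · simp [hx]
  · simp only [abs_mul]
    exact mul_le_mul_of_nonneg_right (hfM x hx) (abs_nonneg _)

theorem IntegrableOn.integrable_mul_of_tsupport_subset [TopologicalSpace α]
    [OpensMeasurableSpace α] {f g : α → ℝ} {s : Set α} (hs : MeasurableSet s)
    (hf : IntegrableOn f s μ) (hg : Continuous g) (hgc : HasCompactSupport g)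
    (hgs : tsupport g ⊆ s) : Integrable (fun x => g x * f x) μ := by
  obtain ⟨C, hC⟩ := hgc.exists_bound_of_continuous hg
  refine ((hf.integrable_indicator hs).bdd_mul hg.aestronglyMeasurable (ae_of_all _ hC)).congr
    (ae_of_all _ fun x => ?_)
  by_cases hx : x ∈ s
  · simp [indicator_of_mem hx]
  · simp [image_eq_zero_of_notMem_tsupport fun h => hx (hgs h)]

theorem setAverage_nonneg {s : Set α} {f : α → ℝ} (hf : ∀ x, 0 ≤ f x) :
    0 ≤ ⨍ x in s, f x ∂μ := by
  rw [setAverage_eq]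
  exact smul_nonneg (by positivity) (integral_nonneg hf)

theorem setAverage_le_of_ae_le {s : Set α} {f : α → ℝ} {C : ℝ} (hC : 0 ≤ C)
    (hf : ∀ᵐ x ∂μ.restrict s, f x ≤ C) : ⨍ x in s, f x ∂μ ≤ C := by
  rcases eq_or_ne (μ s) ⊤ with hs | hs
  · simp [setAverage_eq, measureReal_def, hs, hC]
  by_cases hint : IntegrableOn f s μ
  · have hle := integral_mono_ae hint (integrableOn_const hs) hf
    rw [setIntegral_const, smul_eq_mul] at hle
    rw [setAverage_eq, smul_eq_mul]
    rcases eq_or_ne (μ.real s) 0 with h0 | h0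
    · simp [h0, hC]
    · calc (μ.real s)⁻¹ * ∫ x in s, f x ∂μ ≤ (μ.real s)⁻¹ * (μ.real s * C) := by gcongr
        _ = C := by field_simp
  · simp [setAverage_eq, integral_undef hint, hC]

theorem setAverage_abs_sub_le {s : Set α} {v : α → ℝ} {L : ℝ} {x : α}
    (hs : MeasurableSet s) (hvL : ∀ y ∈ s, |v y| ≤ L) (hx : |v x| ≤ L) :
    ⨍ y in s, |v x - v y| ∂μ ≤ 2 * L := by
  refine setAverage_le_of_ae_le (by linarith [abs_nonneg (v x)])
    ((ae_restrict_iff' hs).2 (ae_of_all _ fun y hy => ?_))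
  linarith [abs_sub (v x) (v y), hvL y hy]

theorem StronglyMeasurable.setAverage_prod_right {β : Type*} [MeasurableSpace β]
    {f : α × β → ℝ} (hf : StronglyMeasurable f) {ν : Measure β} [SFinite ν] (s : Set β) :
    StronglyMeasurable fun x => ⨍ y in s, f (x, y) ∂ν := by
  simp only [setAverage_eq]
  exact (hf.integral_prod_right' (ν := ν.restrict s)).const_smul (ν.real s)⁻¹

theorem integrableOn_setAverage_prod_right {β : Type*} [MeasurableSpace β] {f : α × β → ℝ}
    (hf : StronglyMeasurable f) (hf0 : ∀ p, 0 ≤ f p) {ν : Measure β} [SFinite ν] {s : Set β}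
    {T : Set α} (hT : MeasurableSet T) (hμT : μ T ≠ ⊤) {C : ℝ}
    (hC : ∀ x ∈ T, ⨍ y in s, f (x, y) ∂ν ≤ C) :
    IntegrableOn (fun x => ⨍ y in s, f (x, y) ∂ν) T μ :=
  Measure.integrableOn_of_bounded hμT (hf.setAverage_prod_right s).aestronglyMeasurable
    ((ae_restrict_iff' hT).2 (ae_of_all _ fun x hx => by
      rw [Real.norm_eq_abs, abs_of_nonneg (setAverage_nonneg fun _ => hf0 _)]
      exact hC x hx))

theorem integrableOn_setAverage_setAverage_abs_sub {β : Type*} [MeasurableSpace β] [SFinite μ]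
    {ν : Measure β} {u : β × α → ℝ} (hu : Measurable u) {s : Set α} (hs : MeasurableSet s)
    {T : Set β} (hT : MeasurableSet T) (hνT : ν T ≠ ⊤) {M : ℝ} (hM : 0 ≤ M)
    (huM : ∀ τ ∈ T, ∀ x ∈ s, |u (τ, x)| ≤ M) :
    IntegrableOn (fun τ => ⨍ x in s, ⨍ y in s, |u (τ, x) - u (τ, y)| ∂μ ∂μ) T ν :=
  integrableOn_setAverage_prod_right
    (f := fun p : β × α => ⨍ y in s, |u (p.1, p.2) - u (p.1, y)| ∂μ)
    (StronglyMeasurable.setAverage_prod_right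
      (f := fun q : (β × α) × α => |u q.1 - u (q.1.1, q.2)|) (by fun_prop) s)
    (fun _ => setAverage_nonneg fun _ => abs_nonneg _) hT hνT fun τ hτ =>
      setAverage_le_of_ae_le (by positivity) ((ae_restrict_iff' hs).2 (ae_of_all _ fun x hx =>
        setAverage_abs_sub_le hs (huM τ hτ) (huM τ hτ x hx)))

theorem abs_sub_setAverage_le {s : Set α} (hs : MeasurableSet s) (hs0 : μ s ≠ 0)
    (hsfin : μ s ≠ ⊤) {w v : α → ℝ} {M : ℝ} (hw : IntegrableOn w s μ) (hv : IntegrableOn v s μ)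
    {x : α} (hwv : ∀ y ∈ s, |w x - w y| ≤ M * |v x - v y|) :
    |w x - ⨍ y in s, w y ∂μ| ≤ M * ⨍ y in s, |v x - v y| ∂μ := by
  have hpos : 0 < μ.real s := ENNReal.toReal_pos hs0 hsfin
  have hmean : w x - ⨍ y in s, w y ∂μ = (μ.real s)⁻¹ * ∫ y in s, (w x - w y) ∂μ := by
    rw [integral_sub (integrableOn_const hsfin (C := w x)) hw, setIntegral_const, setAverage_eq,
      smul_eq_mul, smul_eq_mul]
    field_simp
  rw [hmean, abs_mul, abs_of_pos (inv_pos.2 hpos), setAverage_eq, smul_eq_mul, mul_left_comm,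
    ← integral_const_mul]
  gcongr
  exact abs_integral_le_integral_abs.trans (setIntegral_mono_on
    ((integrableOn_const hsfin).sub hw).abs
    (((integrableOn_const hsfin).sub hv).abs.const_mul M) hs hwv)

theorem abs_integral_sq_mul_le [SFinite μ] {s : Set α} (hs : MeasurableSet s) (hs0 : μ s ≠ 0)
    (hsfin : μ s ≠ ⊤) {v g : α → ℝ} {M B : ℝ} (hv : Measurable v)
    (hvM : ∀ x ∈ s, |v x| ≤ M) (hg : AEStronglyMeasurable g μ) (hgB : ∀ x, |g x| ≤ B)
    (hgs : ∀ x ∉ s, g x = 0) (hg0 : ∫ x, g x ∂μ = 0) :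
    |∫ x, v x ^ 2 / 2 * g x ∂μ| ≤
      B * M * μ.real s * ⨍ x in s, ⨍ y in s, |v x - v y| ∂μ ∂μ := by
  have hvM' : ∀ᵐ x ∂μ.restrict s, ‖v x‖ ≤ M := (ae_restrict_iff' hs).2 (ae_of_all _ hvM)
  have hvint : IntegrableOn v s μ :=
    Measure.integrableOn_of_bounded hsfin hv.aestronglyMeasurable hvM'
  have hwint : IntegrableOn (fun x => v x ^ 2 / 2) s μ := by
    simp only [sq]
    exact (hvint.mul_bdd hv.aestronglyMeasurable hvM').div_const 2
  have hosc : IntegrableOn (fun x => ⨍ y in s, |v x - v y| ∂μ) s μ :=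
    integrableOn_setAverage_prod_right (f := fun p : α × α => |v p.1 - v p.2|) (by fun_prop)
      (fun _ => abs_nonneg _) hs hsfin fun x hx => setAverage_abs_sub_le hs hvM (hvM x hx)
  set c := ⨍ y in s, v y ^ 2 / 2 ∂μ
  have hcentre : ∫ x, v x ^ 2 / 2 * g x ∂μ = ∫ x in s, (v x ^ 2 / 2 - c) * g x ∂μ := by
    have hc : ∫ x in s, c * g x ∂μ = 0 := by
      rw [integral_const_mul, setIntegral_eq_integral_of_forall_compl_eq_zero hgs, hg0, mul_zero]
    simp only [sub_mul]
    rw [integral_sub (hwint.mul_bdd hg.restrict (ae_of_all _ hgB))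
      ((Measure.integrableOn_of_bounded hsfin hg (ae_of_all _ hgB)).const_mul c), hc, sub_zero,
      setIntegral_eq_integral_of_forall_compl_eq_zero fun x hx => by rw [hgs x hx, mul_zero]]
  calc |∫ x, v x ^ 2 / 2 * g x ∂μ| = |∫ x in s, (v x ^ 2 / 2 - c) * g x ∂μ| := by rw [hcentre]
    _ ≤ ∫ x in s, B * (M * ⨍ y in s, |v x - v y| ∂μ) ∂μ := by
        refine abs_integral_le_integral_abs.trans (integral_mono_of_nonneg
          (ae_of_all _ fun _ => abs_nonneg _) ((hosc.const_mul M).const_mul B)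
          ((ae_restrict_iff' hs).2 (ae_of_all _ fun x hx => ?_)))
        simp only [abs_mul]
        rw [mul_comm B]
        exact mul_le_mul (abs_sub_setAverage_le hs hs0 hsfin hwint hvint
          fun y hy => abs_sq_div_two_sub_le (hvM x hx) (hvM y hy)) (hgB x) (abs_nonneg _)
          (mul_nonneg ((abs_nonneg _).trans (hvM x hx)) (setAverage_nonneg fun _ => abs_nonneg _))
    _ = B * M * μ.real s * ⨍ x in s, ⨍ y in s, |v x - v y| ∂μ ∂μ := by
        rw [integral_const_mul, integral_const_mul, ← measure_smul_setAverage _ hsfin,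
          smul_eq_mul]
        ring

end MeasureTheory

section WeakDerivative

theorem IsCompact.exists_subset_Icc_of_subset_Ioo {K : Set ℝ} (hK : IsCompact K) {a b : ℝ}
    (hab : a < b) (hKab : K ⊆ Ioo a b) : ∃ a' b', a < a' ∧ b' < b ∧ K ⊆ Icc a' b' := by
  rcases K.eq_empty_or_nonempty with rfl | hne
  · exact ⟨(a + b) / 2, (a + b) / 2, by linarith, by linarith, empty_subset _⟩
  · exact ⟨sInf K, sSup K, (hKab (hK.sInf_mem hne)).1, (hKab (hK.sSup_mem hne)).2,
      subset_Icc_csInf_csSup hK.bddBelow hK.bddAbove⟩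

theorem intervalIntegral_eq_zero_of_notMem_Icc {w : ℝ → ℝ} {a a' b' t : ℝ} (ha : a < a')
    (hw : ∀ x ∉ Icc a' b', w x = 0) (hw0 : ∫ x, w x = 0) (ht : t ∉ Icc a' b') :
    ∫ x in a..t, w x = 0 := by
  rcases lt_or_ge t a' with hta | hat
  · refine (intervalIntegral.integral_congr (g := fun _ => 0) fun x hx => hw x fun h => ?_).trans
      intervalIntegral.integral_zero
    exact absurd (hx.2.trans_lt (max_lt ha hta)) (not_lt.2 h.1)
  · have hbt : b' < t := lt_of_not_ge fun h => ht ⟨hat, h⟩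
    rw [intervalIntegral.integral_of_le (ha.le.trans hat),
      setIntegral_eq_integral_of_forall_compl_eq_zero fun x hx => hw x fun h =>
        hx (show x ∈ Ioc a t from ⟨ha.trans_le h.1, h.2.trans hbt.le⟩), hw0]

theorem exists_hasCompactSupport_deriv_eq {a b : ℝ} (hab : a < b) {w : ℝ → ℝ}
    (hw : ContDiff ℝ (⊤ : ℕ∞) w) (hwc : HasCompactSupport w) (hws : tsupport w ⊆ Ioo a b)
    (hw0 : ∫ x, w x = 0) :
    ∃ ψ : ℝ → ℝ, ContDiff ℝ (⊤ : ℕ∞) ψ ∧ HasCompactSupport ψ ∧ tsupport ψ ⊆ Ioo a b ∧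
      deriv ψ = w := by
  obtain ⟨a', b', ha', hb', hK⟩ := hwc.isCompact.exists_subset_Icc_of_subset_Ioo hab hws
  have hψ' : deriv (fun t => ∫ x in a..t, w x) = w := funext (hw.continuous.deriv_integral w a)
  have hψs : tsupport (fun t => ∫ x in a..t, w x) ⊆ Icc a' b' :=
    closure_minimal (fun t ht => by_contra fun h => ht (intervalIntegral_eq_zero_of_notMem_Icc ha'
      (fun x hx => image_eq_zero_of_notMem_tsupport fun h => hx (hK h)) hw0 h)) isClosed_Icc
  refine ⟨fun t => ∫ x in a..t, w x, contDiff_infty_iff_deriv.2 ⟨fun t =>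
      (hw.continuous.integral_hasStrictDerivAt a t).hasDerivAt.differentiableAt, hψ'.symm ▸ hw⟩,
    isCompact_Icc.of_isClosed_subset (isClosed_tsupport _) hψs,
    hψs.trans fun x hx => ⟨ha'.trans_le hx.1, hx.2.trans_lt hb'⟩, hψ'⟩

/-- `g - (∫ g) θ` is the derivative of a test function, so testing `f` against `g` only sees
`∫ g`. -/
theorem integral_mul_eq_integral_mul_of_integral_deriv_mul_eq_zero {a b : ℝ} (hab : a < b)
    {f : ℝ → ℝ} (hf : IntegrableOn f (Ioo a b))
    (h : ∀ ψ : ℝ → ℝ, ContDiff ℝ (⊤ : ℕ∞) ψ → HasCompactSupport ψ → tsupport ψ ⊆ Ioo a b →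
      ∫ t, deriv ψ t * f t = 0)
    {θ : ℝ → ℝ} (hθ : ContDiff ℝ (⊤ : ℕ∞) θ) (hθc : HasCompactSupport θ)
    (hθs : tsupport θ ⊆ Ioo a b) (hθ1 : ∫ t, θ t = 1)
    {g : ℝ → ℝ} (hg : ContDiff ℝ (⊤ : ℕ∞) g) (hgc : HasCompactSupport g)
    (hgs : tsupport g ⊆ Ioo a b) :
    ∫ t, g t * f t = (∫ t, g t) * ∫ t, θ t * f t := by
  set I := ∫ t, g t
  have hws : tsupport (fun t => g t - I * θ t) ⊆ tsupport g ∪ tsupport θ :=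
    closure_minimal (fun t ht => by
      by_contra hnot
      simp only [mem_union, not_or] at hnot
      exact ht (by simp [image_eq_zero_of_notMem_tsupport hnot.1,
        image_eq_zero_of_notMem_tsupport hnot.2]))
      ((isClosed_tsupport g).union (isClosed_tsupport θ))
  obtain ⟨ψ, hψ, hψc, hψs, hψ'⟩ := exists_hasCompactSupport_deriv_eq hab
    (hg.sub (contDiff_const.mul hθ)) (hgc.sub hθc.mul_left) (hws.trans (union_subset hgs hθs))
    (by rw [integral_sub (hg.continuous.integrable_of_hasCompactSupport hgc)
      ((hθ.continuous.integrable_of_hasCompactSupport hθc).const_mul I), integral_const_mul,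
      hθ1, mul_one, sub_self])
  have hψf := h ψ hψ hψc hψs
  simp only [hψ', sub_mul, mul_assoc] at hψf
  rw [integral_sub (hf.integrable_mul_of_tsupport_subset measurableSet_Ioo hg.continuous hgc hgs)
    ((hf.integrable_mul_of_tsupport_subset measurableSet_Ioo hθ.continuous hθc hθs).const_mul I),
    integral_const_mul, sub_eq_zero] at hψf
  exact hψf

/-- The du Bois-Reymond lemma. -/
theorem exists_ae_eq_const_of_integral_deriv_mul_eq_zero {a b : ℝ} (hab : a < b) {f : ℝ → ℝ}
    (hf : IntegrableOn f (Ioo a b))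
    (h : ∀ ψ : ℝ → ℝ, ContDiff ℝ (⊤ : ℕ∞) ψ → HasCompactSupport ψ → tsupport ψ ⊆ Ioo a b →
      ∫ t, deriv ψ t * f t = 0) :
    ∃ c, ∀ᵐ t ∂volume.restrict (Ioo a b), f t = c := by
  let bump : ContDiffBump ((a + b) / 2) := ⟨(b - a) / 8, (b - a) / 4, by linarith, by linarith⟩
  have hθs : tsupport (bump.normed volume) ⊆ Ioo a b := by
    rw [bump.tsupport_normed_eq, Real.closedBall_eq_Icc]
    exact Icc_subset_Ioo (by dsimp [bump]; linarith) (by dsimp [bump]; linarith)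
  set c := ∫ t, bump.normed volume t * f t
  have hzero := isOpen_Ioo.ae_eq_zero_of_integral_contDiff_smul_eq_zero
    (hf.sub (integrableOn_const measure_Ioo_lt_top.ne (C := c))).locallyIntegrableOn
    fun g hg hgc hgs => by
      simp only [Pi.sub_apply, smul_eq_mul, mul_sub]
      rw [integral_sub (hf.integrable_mul_of_tsupport_subset measurableSet_Ioo hg.continuous hgc
          hgs) ((hg.continuous.integrable_of_hasCompactSupport hgc).mul_const c),
        integral_mul_const, integral_mul_eq_integral_mul_of_integral_deriv_mul_eq_zero hab hf h
          bump.contDiff_normed bump.hasCompactSupport_normed hθs bump.integral_normed hg hgc hgs,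
        sub_self]
  refine ⟨c, (ae_restrict_iff' measurableSet_Ioo).2 ?_⟩
  filter_upwards [hzero] with t ht hmem
  exact sub_eq_zero.1 (ht hmem)

theorem integral_deriv_mul_integral_Iic {ψ g : ℝ → ℝ} (hψ : ContDiff ℝ 1 ψ)
    (hψc : HasCompactSupport ψ) (hg : Integrable g) :
    ∫ t, deriv ψ t * ∫ τ in Iic t, g τ = -∫ τ, ψ τ * g τ := by
  have hψ' : Integrable (deriv ψ) :=
    (hψ.continuous_deriv le_rfl).integrable_of_hasCompactSupport hψc.deriv
  let S : Set (ℝ × ℝ) := {p | p.2 ≤ p.1}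
  have hS : MeasurableSet S := measurableSet_le measurable_snd measurable_fst
  calc ∫ t, deriv ψ t * ∫ τ in Iic t, g τ
      = ∫ t, ∫ τ, S.indicator (fun p => deriv ψ p.1 * g p.2) (t, τ) := by
        refine integral_congr_ae (ae_of_all _ fun t => ?_)
        simp only [← integral_indicator measurableSet_Iic, ← integral_const_mul]
        congr 1 with τ
        by_cases hτ : τ ≤ t <;> simp [S, hτ]
    _ = ∫ τ, ∫ t, S.indicator (fun p => deriv ψ p.1 * g p.2) (t, τ) :=
        integral_integral_swap ((hψ'.mul_prod hg).indicator hS)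
    _ = ∫ τ, -(ψ τ * g τ) := by
        refine integral_congr_ae (ae_of_all _ fun τ => ?_)
        have hslice : (fun t => S.indicator (fun p => deriv ψ p.1 * g p.2) (t, τ)) =
            (Ici τ).indicator (fun t => deriv ψ t * g τ) := by
          ext t
          by_cases hτ : τ ≤ t <;> simp [S, hτ]
        simp only [hslice, integral_indicator measurableSet_Ici, integral_Ici_eq_integral_Ioi,
          integral_mul_const, hψc.integral_Ioi_deriv_eq hψ τ]
        ring
    _ = -∫ τ, ψ τ * g τ := integral_neg _

theorem ae_sub_eq_intervalIntegral_of_integral_deriv_mul_add_mul_eq_zero {a b : ℝ} (hab : a < b)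
    {F g : ℝ → ℝ} (hF : IntegrableOn F (Ioo a b)) (hg : Integrable g)
    (h : ∀ ψ : ℝ → ℝ, ContDiff ℝ (⊤ : ℕ∞) ψ → HasCompactSupport ψ → tsupport ψ ⊆ Ioo a b →
      ∫ t, (deriv ψ t * F t + ψ t * g t) = 0) :
    ∀ᵐ s ∂volume.restrict (Ioo a b), ∀ᵐ t ∂volume.restrict (Ioo a b),
      F s - F t = ∫ τ in t..s, g τ := by
  set H : ℝ → ℝ := fun t => ∫ τ in Iic t, g τ
  have hH : IntegrableOn H (Icc a b) := by
    have hH_eq : H = fun t => (∫ τ in Iic 0, g τ) + ∫ τ in 0..t, g τ := funext fun t => by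
      rw [← intervalIntegral.integral_Iic_sub_Iic hg.integrableOn hg.integrableOn]
      ring
    rw [hH_eq]
    exact (continuous_const.add (hg.continuous_primitive 0)).integrableOn_Icc
  obtain ⟨c, hc⟩ := exists_ae_eq_const_of_integral_deriv_mul_eq_zero hab
    (hF.sub (hH.mono_set Ioo_subset_Icc_self)) fun ψ hψ hψc hψs => by
      have hψ' : Continuous (deriv ψ) := hψ.continuous_deriv (by simp)
      have hψ's : tsupport (deriv ψ) ⊆ Ioo a b := tsupport_deriv_subset.trans hψs
      have hψF := hF.integrable_mul_of_tsupport_subset measurableSet_Ioo hψ' hψc.deriv hψ's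
      have hψH := hH.integrable_mul_of_tsupport_subset measurableSet_Icc hψ' hψc.deriv
        (hψ's.trans Ioo_subset_Icc_self)
      have hψg := hg.integrableOn.integrable_mul_of_tsupport_subset MeasurableSet.univ
        hψ.continuous hψc (subset_univ _)
      have hweak := h ψ hψ hψc hψs
      rw [integral_add hψF hψg] at hweak
      simp only [Pi.sub_apply, mul_sub]
      rw [integral_sub hψF hψH, integral_deriv_mul_integral_Iic (hψ.of_le (by simp)) hψc hg]
      linarith
  filter_upwards [hc] with s hs
  filter_upwards [hc] with t ht
  rw [← intervalIntegral.integral_Iic_sub_Iic hg.integrableOn hg.integrableOn]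
  simp only [Pi.sub_apply] at hs ht
  linarith

end WeakDerivative

section ProductTestFunction

variable {ψ ζ : ℝ → ℝ}

theorem tsupport_mul_prod_subset {X Y R : Type*} [TopologicalSpace X] [TopologicalSpace Y]
    [MulZeroClass R] {f : X → R} {g : Y → R} :
    tsupport (fun z : X × Y => f z.1 * g z.2) ⊆ tsupport f ×ˢ tsupport g :=
  closure_minimal (fun _ hz => ⟨subset_closure (left_ne_zero_of_mul hz),
    subset_closure (right_ne_zero_of_mul hz)⟩) ((isClosed_tsupport f).prod (isClosed_tsupport g))

theorem HasCompactSupport.mul_prod {X Y R : Type*} [TopologicalSpace X] [TopologicalSpace Y]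
    [MulZeroClass R] {f : X → R} {g : Y → R} (hf : HasCompactSupport f)
    (hg : HasCompactSupport g) : HasCompactSupport fun z : X × Y => f z.1 * g z.2 :=
  (hf.prod hg).of_isClosed_subset (isClosed_tsupport _) tsupport_mul_prod_subset

theorem fderiv_mul_prod_apply (hψ : Differentiable ℝ ψ) (hζ : Differentiable ℝ ζ)
    (z v : ℝ × ℝ) : fderiv ℝ (fun w => ψ w.1 * ζ w.2) z v =
      deriv ψ z.1 * ζ z.2 * v.1 + ψ z.1 * deriv ζ z.2 * v.2 := by
  have h : HasFDerivAt (fun w : ℝ × ℝ => ψ w.1 * ζ w.2) _ z :=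
    ((hψ z.1).hasDerivAt.hasFDerivAt.comp z hasFDerivAt_fst).mul
      ((hζ z.2).hasDerivAt.hasFDerivAt.comp z hasFDerivAt_snd)
  rw [h.fderiv]
  simp only [Function.comp_apply, add_apply, smul_apply, ContinuousLinearMap.comp_apply,
    ContinuousLinearMap.coe_snd', ContinuousLinearMap.coe_fst',
    ContinuousLinearMap.toSpanSingleton_apply, smul_eq_mul]
  ring

theorem pdt_mul_prod (hψ : Differentiable ℝ ψ) (hζ : Differentiable ℝ ζ) (z : ℝ × ℝ) :
    pdt (fun w => ψ w.1 * ζ w.2) z = deriv ψ z.1 * ζ z.2 := by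
  simp [pdt, fderiv_mul_prod_apply hψ hζ]

theorem pdx_mul_prod (hψ : Differentiable ℝ ψ) (hζ : Differentiable ℝ ζ) (z : ℝ × ℝ) :
    pdx (fun w => ψ w.1 * ζ w.2) z = ψ z.1 * deriv ζ z.2 := by
  simp [pdx, fderiv_mul_prod_apply hψ hζ]

theorem isTestFun_mul_prod {Ω : Set (ℝ × ℝ)} (hψ : ContDiff ℝ (⊤ : ℕ∞) ψ)
    (hψc : HasCompactSupport ψ) (hζ : ContDiff ℝ (⊤ : ℕ∞) ζ) (hζc : HasCompactSupport ζ)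
    (hΩ : tsupport ψ ×ˢ tsupport ζ ⊆ Ω) : IsTestFun Ω fun z => ψ z.1 * ζ z.2 :=
  ⟨(hψ.comp contDiff_fst).mul (hζ.comp contDiff_snd), hψc.mul_prod hζc,
    tsupport_mul_prod_subset.trans hΩ⟩

end ProductTestFunction

section Burgers

variable {Ω : Set (ℝ × ℝ)} {u : ℝ × ℝ → ℝ} {M : ℝ}

theorem IsWeakBurgers.integral_deriv_mul_add_mul_eq_zero (hu : IsWeakBurgers Ω u)
    (hum : Measurable u) (hub : ∀ z ∈ Ω, |u z| ≤ M) {ψ ζ : ℝ → ℝ}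
    (hψ : ContDiff ℝ (⊤ : ℕ∞) ψ) (hψc : HasCompactSupport ψ) (hζ : ContDiff ℝ (⊤ : ℕ∞) ζ)
    (hζc : HasCompactSupport ζ) (hΩ : tsupport ψ ×ˢ tsupport ζ ⊆ Ω) :
    ∫ t, (deriv ψ t * (∫ x, u (t, x) * ζ x) + ψ t * ∫ x, u (t, x) ^ 2 / 2 * deriv ζ x) = 0 := by
  have hψ1 : Differentiable ℝ ψ := hψ.differentiable (by simp)
  have hζ1 : Differentiable ℝ ζ := hζ.differentiable (by simp)
  have hψ' : Continuous (deriv ψ) := hψ.continuous_deriv (by simp)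
  have hζ' : Continuous (deriv ζ) := hζ.continuous_deriv (by simp)
  have hΩ₁ : ∀ z : ℝ × ℝ, deriv ψ z.1 * ζ z.2 ≠ 0 → z ∈ Ω := fun z hz =>
    hΩ ⟨support_deriv_subset (left_ne_zero_of_mul hz), subset_closure (right_ne_zero_of_mul hz)⟩
  have hΩ₂ : ∀ z : ℝ × ℝ, ψ z.1 * deriv ζ z.2 ≠ 0 → z ∈ Ω := fun z hz =>
    hΩ ⟨subset_closure (left_ne_zero_of_mul hz), support_deriv_subset (right_ne_zero_of_mul hz)⟩
  have h₁ : Integrable (fun z : ℝ × ℝ => u z * (deriv ψ z.1 * ζ z.2)) :=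
    ((hψ'.comp continuous_fst).mul (hζ.continuous.comp continuous_snd)
      |>.integrable_of_hasCompactSupport (hψc.deriv.mul_prod hζc)).mul_of_abs_le_of_ne_zero
      hum.aestronglyMeasurable fun z hz => hub z (hΩ₁ z hz)
  have h₂ : Integrable (fun z : ℝ × ℝ => u z ^ 2 / 2 * (ψ z.1 * deriv ζ z.2)) :=
    ((hψ.continuous.comp continuous_fst).mul (hζ'.comp continuous_snd)
      |>.integrable_of_hasCompactSupport (hψc.mul_prod hζc.deriv)).mul_of_abs_le_of_ne_zero
      ((hum.pow_const 2).div_const 2).aestronglyMeasurable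
      fun z hz => abs_sq_div_two_le (hub z (hΩ₂ z hz))
  have hweak := hu _ (isTestFun_mul_prod hψ hψc hζ hζc hΩ)
  simp only [pdt_mul_prod hψ1 hζ1, pdx_mul_prod hψ1 hζ1] at hweak
  rw [setIntegral_eq_integral_of_forall_compl_eq_zero fun z hz => by
    rw [not_imp_comm.1 (hΩ₁ z) hz, not_imp_comm.1 (hΩ₂ z) hz, mul_zero, mul_zero, add_zero],
    Measure.volume_eq_prod, integral_prod (μ := volume) (ν := volume)
      (fun z => u z * (deriv ψ z.1 * ζ z.2) + u z ^ 2 / 2 * (ψ z.1 * deriv ζ z.2)) (h₁.add h₂)]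
    at hweak
  rw [← hweak]
  refine integral_congr_ae ?_
  filter_upwards [h₁.prod_right_ae, h₂.prod_right_ae] with t ht₁ ht₂
  rw [integral_add ht₁ ht₂, ← integral_const_mul, ← integral_const_mul]
  congr 1 <;> exact integral_congr_ae (ae_of_all _ fun x => by ring)

theorem integrableOn_integral_mul (hum : Measurable u) {ζ : ℝ → ℝ} (hζ : Continuous ζ)
    (hζc : HasCompactSupport ζ) {T : Set ℝ} (hT : MeasurableSet T) (hTfin : volume T ≠ ⊤)
    (huM : ∀ t ∈ T, ∀ x, ζ x ≠ 0 → |u (t, x)| ≤ M) :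
    IntegrableOn (fun t => ∫ x, u (t, x) * ζ x) T :=
  Measure.integrableOn_of_bounded hTfin
    (StronglyMeasurable.integral_prod_right' (f := fun p : ℝ × ℝ => u p * ζ p.2)
      (hum.mul (hζ.measurable.comp measurable_snd)).stronglyMeasurable).aestronglyMeasurable
    ((ae_restrict_iff' hT).2 (ae_of_all _ fun t ht => abs_integral_mul_le_of_abs_le_of_ne_zero
      (hζ.integrable_of_hasCompactSupport hζc) (huM t ht)))

theorem integrableOn_integral_sq_mul_deriv (hum : Measurable u) (hub : ∀ z ∈ Ω, |u z| ≤ M)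
    {ζ : ℝ → ℝ} (hζ : ContDiff ℝ (⊤ : ℕ∞) ζ) (hζc : HasCompactSupport ζ) {a b : ℝ}
    (hΩ : Ioo a b ×ˢ tsupport ζ ⊆ Ω) :
    IntegrableOn (fun t => ∫ x, u (t, x) ^ 2 / 2 * deriv ζ x) (Ioo a b) :=
  integrableOn_integral_mul (u := fun z => u z ^ 2 / 2) ((hum.pow_const 2).div_const 2)
    (hζ.continuous_deriv (by simp)) hζc.deriv measurableSet_Ioo measure_Ioo_lt_top.ne
    fun _ ht _ hx => abs_sq_div_two_le (hub _ (hΩ ⟨ht, support_deriv_subset hx⟩))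

theorem IsWeakBurgers.ae_sub_eq_intervalIntegral (hu : IsWeakBurgers Ω u) (hum : Measurable u)
    (hub : ∀ z ∈ Ω, |u z| ≤ M) {ζ : ℝ → ℝ} (hζ : ContDiff ℝ (⊤ : ℕ∞) ζ)
    (hζc : HasCompactSupport ζ) {a b : ℝ} (hab : a < b) (hΩ : Ioo a b ×ˢ tsupport ζ ⊆ Ω) :
    ∀ᵐ s ∂volume.restrict (Ioo a b), ∀ᵐ t ∂volume.restrict (Ioo a b),
      (∫ x, u (s, x) * ζ x) - ∫ x, u (t, x) * ζ x =
        ∫ τ in t..s, (Ioo a b).indicator (fun τ => ∫ x, u (τ, x) ^ 2 / 2 * deriv ζ x) τ := by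
  refine ae_sub_eq_intervalIntegral_of_integral_deriv_mul_add_mul_eq_zero hab
    (integrableOn_integral_mul hum hζ.continuous hζc measurableSet_Ioo measure_Ioo_lt_top.ne
      fun _ ht _ hx => hub _ (hΩ ⟨ht, subset_closure hx⟩))
    ((integrableOn_integral_sq_mul_deriv hum hub hζ hζc hΩ).integrable_indicator
      measurableSet_Ioo) fun ψ hψ hψc hψs => ?_
  rw [← hu.integral_deriv_mul_add_mul_eq_zero hum hub hψ hψc hζ hζc
    ((prod_mono hψs subset_rfl).trans hΩ)]
  congr 1 with t
  by_cases ht : t ∈ Ioo a b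
  · rw [indicator_of_mem ht]
  · rw [image_eq_zero_of_notMem_tsupport fun h => ht (hψs h), zero_mul, zero_mul]

theorem IsWeakBurgers.setAverage_setAverage_abs_integral_sub_le (hu : IsWeakBurgers Ω u)
    (hum : Measurable u) (hub : ∀ z ∈ Ω, |u z| ≤ M) {ζ : ℝ → ℝ} (hζ : ContDiff ℝ (⊤ : ℕ∞) ζ)
    (hζc : HasCompactSupport ζ) {a b c d : ℝ} (hab : a < b) (hcd : Icc c d ⊆ Ioo a b)
    (hΩ : Ioo a b ×ˢ tsupport ζ ⊆ Ω) :
    ⨍ s in Icc c d, ⨍ t in Icc c d, |∫ x, (u (s, x) - u (t, x)) * ζ x| ≤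
      ∫ τ in Icc c d, |∫ x, u (τ, x) ^ 2 / 2 * deriv ζ x| := by
  set G := (Ioo a b).indicator fun τ => ∫ x, u (τ, x) ^ 2 / 2 * deriv ζ x
  have hslice : ∀ s ∈ Ioo a b, Integrable fun x => u (s, x) * ζ x := fun s hs =>
    (hζ.continuous.integrable_of_hasCompactSupport hζc).mul_of_abs_le_of_ne_zero
      (hum.comp measurable_prodMk_left).aestronglyMeasurable
      fun x hx => hub _ (hΩ ⟨hs, subset_closure hx⟩)
  have hG : Integrable G :=
    (integrableOn_integral_sq_mul_deriv hum hub hζ hζc hΩ).integrable_indicator measurableSet_Ioo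
  have hK : 0 ≤ ∫ τ in Icc c d, |∫ x, u (τ, x) ^ 2 / 2 * deriv ζ x| :=
    integral_nonneg fun _ => abs_nonneg _
  have hFG := ae_restrict_of_ae_restrict_of_subset hcd
    (hu.ae_sub_eq_intervalIntegral hum hub hζ hζc hab hΩ)
  refine setAverage_le_of_ae_le hK ?_
  filter_upwards [hFG, ae_restrict_mem measurableSet_Icc] with s hs hsI
  refine setAverage_le_of_ae_le hK ?_
  filter_upwards [ae_restrict_of_ae_restrict_of_subset hcd hs, ae_restrict_mem measurableSet_Icc]
    with t ht htI
  simp only [sub_mul]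
  rw [integral_sub (hslice s (hcd hsI)) (hslice t (hcd htI)), ht]
  calc |∫ τ in t..s, G τ| ≤ ∫ τ in uIoc t s, |G τ| :=
        intervalIntegral.norm_integral_le_integral_norm_uIoc (a := t) (b := s) (f := G)
          (μ := volume)
    _ ≤ ∫ τ in Icc c d, |G τ| :=
        setIntegral_mono_set hG.abs.integrableOn (ae_of_all _ fun _ => abs_nonneg _)
          (uIoc_subset_uIcc.trans (uIcc_subset_Icc htI hsI)).eventuallyLE
    _ = _ := setIntegral_congr_fun measurableSet_Icc fun τ hτ => by
        simp only [G, indicator_of_mem (hcd hτ)]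

end Burgers

/-- `rescale η r` is the paper's `η_r`. -/
def rescale (η : ℝ → ℝ) (r x : ℝ) : ℝ := r⁻¹ * η (x / r)

section Rescaling

variable {η : ℝ → ℝ} {r : ℝ}

theorem contDiff_rescale (hη : ContDiff ℝ (⊤ : ℕ∞) η) (r : ℝ) :
    ContDiff ℝ (⊤ : ℕ∞) (rescale η r) :=
  contDiff_const.mul (hη.comp (contDiff_id.div_const r))

theorem tsupport_rescale_subset (hη : tsupport η ⊆ Icc (-1) 1) (hr : 0 < r) :
    tsupport (rescale η r) ⊆ Icc (-r) r :=
  closure_minimal (fun x hx => by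
    have h := hη (subset_closure (right_ne_zero_of_mul hx))
    rw [mem_Icc, le_div_iff₀ hr, div_le_iff₀ hr] at h
    exact ⟨by linarith, by linarith⟩) isClosed_Icc

theorem hasCompactSupport_rescale (hη : tsupport η ⊆ Icc (-1) 1) (hr : 0 < r) :
    HasCompactSupport (rescale η r) :=
  isCompact_Icc.of_isClosed_subset (isClosed_tsupport _) (tsupport_rescale_subset hη hr)

theorem abs_deriv_rescale_le (hη : Differentiable ℝ η) {B : ℝ} (hB : ∀ x, ‖deriv η x‖ ≤ B)
    (hr : 0 < r) (x : ℝ) : |deriv (rescale η r) x| ≤ B / r ^ 2 := by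
  have h : HasDerivAt (rescale η r) _ x :=
    ((hη (x / r)).hasDerivAt.comp x ((hasDerivAt_id x).div_const r)).const_mul r⁻¹
  rw [h.deriv, show r⁻¹ * (deriv η (x / r) * (1 / r)) = deriv η (x / r) / r ^ 2 by ring,
    abs_div, abs_of_pos (pow_pos hr 2)]
  exact div_le_div_of_nonneg_right (hB _) (by positivity)

theorem abs_integral_sq_mul_deriv_rescale_le (hη : ContDiff ℝ (⊤ : ℕ∞) η)
    (hηs : tsupport η ⊆ Icc (-1) 1) {B : ℝ} (hB : ∀ x, ‖deriv η x‖ ≤ B) (hr : 0 < r)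
    {v : ℝ → ℝ} {M : ℝ} (hv : Measurable v) (hvM : ∀ x ∈ Icc (-r) r, |v x| ≤ M) :
    |∫ x, v x ^ 2 / 2 * deriv (rescale η r) x| ≤
      2 * B * M / r * ⨍ x in Icc (-r) r, ⨍ y in Icc (-r) r, |v x - v y| := by
  have hζ := contDiff_rescale hη r
  have hζc := hasCompactSupport_rescale hηs hr
  have hζ' := hζ.continuous_deriv (by simp)
  have h := abs_integral_sq_mul_le measurableSet_Icc (by simp; linarith) (by simp) hv hvM
    hζ'.aestronglyMeasurable (abs_deriv_rescale_le (hη.differentiable (by simp)) hB hr)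
    (fun x hx => image_eq_zero_of_notMem_tsupport fun h =>
      hx (tsupport_rescale_subset hηs hr (tsupport_deriv_subset h)))
    (integral_eq_zero_of_hasDerivAt_of_integrable
      (fun x => (hζ.differentiable (by simp) x).hasDerivAt)
      (hζ'.integrable_of_hasCompactSupport hζc.deriv)
      (hζ.continuous.integrable_of_hasCompactSupport hζc))
  rw [Real.volume_real_Icc_of_le (by linarith)] at h
  refine h.trans (le_of_eq ?_)
  field_simp
  ring

end Rescaling

theorem stmt15_general (M : ℝ) (hM : 0 ≤ M) (η : ℝ → ℝ)
    (hηs : ContDiff ℝ (⊤ : ℕ∞) η) (hηc : HasCompactSupport η)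
    (hηsupp : tsupport η ⊆ Ioo (-1) 1) :
    ∃ C > 0, ∀ (Ω : Set (ℝ × ℝ)), IsOpen Ω → ∀ r : ℝ, 0 < r →
      Icc (-(2 * r)) (2 * r) ×ˢ Icc (-(2 * r)) (2 * r) ⊆ Ω →
      ∀ u : ℝ × ℝ → ℝ, Measurable u → (∀ z ∈ Ω, |u z| ≤ M) → IsWeakBurgers Ω u →
        (⨍ s in Icc (-r) r, ⨍ t in Icc (-r) r,
            |∫ x, (u (s, x) - u (t, x)) * (r⁻¹ * η (x / r))|)
          ≤ C * ⨍ t in Icc (-r) r, ⨍ x in Icc (-r) r, ⨍ y in Icc (-r) r,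
              |u (t, x) - u (t, y)| := by
  obtain ⟨B, hB⟩ := hηc.deriv.exists_bound_of_continuous (hηs.continuous_deriv (by simp))
  have hB0 : 0 ≤ B := (norm_nonneg _).trans (hB 0)
  refine ⟨4 * M * B + 1, by positivity, fun Ω _ r hr hsub u hum hub hu => ?_⟩
  have hη1 : tsupport η ⊆ Icc (-1) 1 := hηsupp.trans Ioo_subset_Icc_self
  have hsq : ∀ τ ∈ Icc (-r) r, ∀ x ∈ Icc (-r) r, |u (τ, x)| ≤ M := fun τ hτ x hx =>
    hub _ (hsub ⟨Icc_subset_Icc (by linarith) (by linarith) hτ,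
      Icc_subset_Icc (by linarith) (by linarith) hx⟩)
  have hΩ : Ioo (-(2 * r)) (2 * r) ×ˢ tsupport (rescale η r) ⊆ Ω :=
    (Set.prod_mono Ioo_subset_Icc_self ((tsupport_rescale_subset hη1 hr).trans
      (Icc_subset_Icc (by linarith) (by linarith)))).trans hsub
  have hosc := integrableOn_setAverage_setAverage_abs_sub (μ := volume) (ν := volume) hum
    measurableSet_Icc measurableSet_Icc (by simp) hM hsq
  have hD : 0 ≤ ⨍ t in Icc (-r) r, ⨍ x in Icc (-r) r, ⨍ y in Icc (-r) r, |u (t, x) - u (t, y)| :=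
    setAverage_nonneg fun _ => setAverage_nonneg fun _ => setAverage_nonneg fun _ => abs_nonneg _
  calc _ ≤ ∫ τ in Icc (-r) r, |∫ x, u (τ, x) ^ 2 / 2 * deriv (rescale η r) x| :=
        hu.setAverage_setAverage_abs_integral_sub_le hum hub (contDiff_rescale hηs r)
          (hasCompactSupport_rescale hη1 hr) (by linarith) (Icc_subset_Ioo (by linarith)
          (by linarith)) hΩ
    _ ≤ ∫ τ in Icc (-r) r, 2 * B * M / r *
          ⨍ x in Icc (-r) r, ⨍ y in Icc (-r) r, |u (τ, x) - u (τ, y)| :=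
        integral_mono_of_nonneg (ae_of_all _ fun _ => abs_nonneg _) (hosc.const_mul _)
          ((ae_restrict_iff' measurableSet_Icc).2 (ae_of_all _ fun τ hτ =>
            abs_integral_sq_mul_deriv_rescale_le hηs hη1 hB hr
              (hum.comp measurable_prodMk_left) (hsq τ hτ)))
    _ = 4 * M * B * ⨍ t in Icc (-r) r, ⨍ x in Icc (-r) r, ⨍ y in Icc (-r) r,
          |u (t, x) - u (t, y)| := by
        rw [integral_const_mul, ← measure_smul_setAverage _ (by simp),
          Real.volume_real_Icc_of_le (by linarith), smul_eq_mul]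
        field_simp
        ring
    _ ≤ _ := by gcongr; linarith

/-- **Step 3 of the proof of Theorem 1: transfer of spatial regularity to time regularity
through the equation.** -/
theorem stmt15 (M : ℝ) (hM : 0 ≤ M) (η : ℝ → ℝ)
    (hηs : ContDiff ℝ (⊤ : ℕ∞) η) (hηc : HasCompactSupport η)
    (hηsupp : tsupport η ⊆ Ioo (-1) 1) (hηint : ∫ x, η x = 1) :
    ∃ C > 0, ∀ (Ω : Set (ℝ × ℝ)), IsOpen Ω → ∀ r : ℝ, 0 < r →
      Icc (-(2 * r)) (2 * r) ×ˢ Icc (-(2 * r)) (2 * r) ⊆ Ω →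
      ∀ u : ℝ × ℝ → ℝ, Measurable u → (∀ z ∈ Ω, |u z| ≤ M) → IsWeakBurgers Ω u →
        (⨍ s in Icc (-r) r, ⨍ t in Icc (-r) r,
            |∫ x, (u (s, x) - u (t, x)) * (r⁻¹ * η (x / r))|)
          ≤ C * ⨍ t in Icc (-r) r, ⨍ x in Icc (-r) r, ⨍ y in Icc (-r) r,
              |u (t, x) - u (t, y)| :=
  stmt15_general M hM η hηs hηc hηsupp
end
end

section
/- Let Q = (0,1)² and let h : [0,1]² → ℝ be a Lipschitz function that satisfies ∂_t h + (1/2)(∂_x h)² = 0 almost everywhere in Q, and set L := ‖∂_x h‖_{L^∞(Q)} (so that x ↦ h(t,x) is L-Lipschitz and t ↦ h(t,x) is (L²/2)-Lipschitz). Let h̄ be the Hopf–Lax function h̄(t,x) := inf { h(s,y) + (x−y)²/(2(t−s)) : (s,y) ∈ ∂₀Q, s < t } for (t,x) ∈ Q. Then for every t ∈ (0,1), the function x ↦ h̄(t,x) is L-Lipschitz on (0,1); equivalently, |∂_x h̄| ≤ L almost everywhere in Q. -/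
open MeasureTheory Set Filter Topology

noncomputable section

/-- The unit square `Q = (0,1) × (0,1)`. -/
def Qunit : Set (ℝ × ℝ) := Ioo (0:ℝ) 1 ×ˢ Ioo (0:ℝ) 1

/-- The parabolic boundary `∂₀Q = ({0} × (0,1)) ∪ ((0,1) × {0,1})`. -/
def parbQ : Set (ℝ × ℝ) :=
  ({(0:ℝ)} ×ˢ Ioo (0:ℝ) 1) ∪ (Ioo (0:ℝ) 1 ×ˢ ({0, 1} : Set ℝ))

/-- The Hopf–Lax function associated with the values of `h` on the parabolic boundary:
`h̄(t,x) = inf { h(s,y) + (x-y)²/(2(t-s)) : (s,y) ∈ ∂₀Q, s < t }`. -/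
def hopfLax (h : ℝ × ℝ → ℝ) (z : ℝ × ℝ) : ℝ :=
  sInf {v : ℝ | ∃ w ∈ parbQ, w.1 < z.1 ∧ v = h w + (z.2 - w.2) ^ 2 / (2 * (z.1 - w.1))}

/-!
The hypotheses make `x ↦ h (t, x)` `L`-Lipschitz and `t ↦ h (t, x)` `L²/2`-Lipschitz on the
closed square: on almost every slice the Lipschitz function is the integral of its derivative,
which is bounded by `L`, resp. by `|∂ₜh| = (∂ₓh)²/2 ≤ L²/2`, and continuity carries the bounds
to every slice.

For `x ≤ x'`, every competitor `w ∈ ∂₀Q` for `h̄(t, x')`, say `w = (s, y)`, is matched with a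
point of the closure of `∂₀Q` (allowed, `h` being continuous) whose cost for `x` exceeds the
cost of `w` for `x'` by at most `L (x' - x)`: on the initial line shift `w` by `x' - x` towards
`0` (stopping at `0`), on the wall `x = 0` keep `w`, and on the wall `x = 1` either keep `w` or
follow the characteristic of slope `L` through `(t, x)` back to the wall or to the initial line;
the estimate then reduces to `L b ≤ b² / (2τ) + L² τ / 2` for `b = 1 - x'` and `τ = t - s`.
Reflecting `x ↦ 1 - x` gives the other inequality.
-/

open scoped Interval in
theorem LipschitzOnWith.abs_sub_le_of_ae_abs_deriv_le {g : ℝ → ℝ} {K : NNReal} {a b M : ℝ}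
    (hg : LipschitzOnWith K g (Icc a b)) (hd : ∀ᵐ y ∂volume.restrict (Ioo a b), |deriv g y| ≤ M)
    {u v : ℝ} (hu : u ∈ Icc a b) (hv : v ∈ Icc a b) : |g v - g u| ≤ M * |v - u| := by
  have hsub : uIcc u v ⊆ Icc a b := uIcc_subset_Icc hu hv
  rw [← (hg.mono hsub).absolutelyContinuousOnInterval.integral_deriv_eq_sub, ← Real.norm_eq_abs]
  refine intervalIntegral.norm_integral_le_of_norm_le_const_ae ?_
  have hd' : ∀ᵐ y ∂volume.restrict (Ι u v), |deriv g y| ≤ M :=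
    ae_restrict_of_ae_restrict_of_subset (uIoc_subset_uIcc.trans hsub)
      ((ae_restrict_congr_set Ioo_ae_eq_Icc).1 hd)
  exact (ae_restrict_iff' measurableSet_uIoc).1 hd'

theorem ContinuousOn.le_of_ae_restrict_Ioo_le {f g : ℝ → ℝ} {a b : ℝ} (hab : a < b)
    (hf : ContinuousOn f (Icc a b)) (hg : ContinuousOn g (Icc a b))
    (h : ∀ᵐ t ∂volume.restrict (Ioo a b), f t ≤ g t) : ∀ t ∈ Icc a b, f t ≤ g t := by
  have hmin : (fun t => min (f t) (g t)) =ᵐ[volume.restrict (Icc a b)] f := by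
    filter_upwards [(ae_restrict_congr_set Ioo_ae_eq_Icc).1 h] with t ht using min_eq_left ht
  have hdense : Icc a b ⊆ closure (interior (Icc a b)) := by
    rw [interior_Icc, closure_Ioo hab.ne]
  intro t ht
  rw [← Measure.eqOn_of_ae_eq hmin (hf.inf hg) hf hdense ht]
  exact min_le_right _ _

theorem ae_restrict_Qunit_swap {P : ℝ × ℝ → Prop} (h : ∀ᵐ z ∂volume.restrict Qunit, P z) :
    ∀ᵐ z ∂volume.restrict Qunit, P z.swap := by
  rw [Qunit, Measure.volume_eq_prod, ← Measure.prod_restrict] at h ⊢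
  exact Measure.measurePreserving_swap.quasiMeasurePreserving.ae h

theorem abs_sub_le_of_ae_abs_deriv_slice_le {f : ℝ × ℝ → ℝ} {K : NNReal} {M : ℝ}
    (hf : LipschitzOnWith K f (Icc 0 1 ×ˢ Icc 0 1))
    (hd : ∀ᵐ z ∂volume.restrict Qunit, |deriv (fun x => f (z.1, x)) z.2| ≤ M) :
    ∀ t ∈ Icc (0:ℝ) 1, ∀ a ∈ Icc (0:ℝ) 1, ∀ b ∈ Icc (0:ℝ) 1,
      |f (t, b) - f (t, a)| ≤ M * |b - a| := by
  have hslice : ∀ t ∈ Icc (0:ℝ) 1, LipschitzOnWith K (fun x => f (t, x)) (Icc 0 1) := by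
    intro t ht
    simpa only [mul_one, Function.comp_def] using
      hf.comp (LipschitzWith.prodMk_left t).lipschitzOnWith fun x hx => mk_mem_prod ht hx
  rw [Qunit, Measure.volume_eq_prod, ← Measure.prod_restrict] at hd
  intro t ht a ha b hb
  refine ContinuousOn.le_of_ae_restrict_Ioo_le (f := fun s => |f (s, b) - f (s, a)|) one_pos ?_
    continuousOn_const ?_ t ht
  · exact (hf.continuousOn.comp (Continuous.prodMk_left _).continuousOn
      fun s hs => mk_mem_prod hs hb).sub
      (hf.continuousOn.comp (Continuous.prodMk_left _).continuousOn
      fun s hs => mk_mem_prod hs ha) |>.abs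
  · filter_upwards [Measure.ae_ae_of_ae_prod hd, ae_restrict_mem measurableSet_Ioo] with s hs hsI
    exact (hslice s (Ioo_subset_Icc_self hsI)).abs_sub_le_of_ae_abs_deriv_le hs ha hb

theorem deriv_slice_snd {h : ℝ × ℝ → ℝ} {z : ℝ × ℝ} (hz : DifferentiableAt ℝ h z) :
    deriv (fun x => h (z.1, x)) z.2 = pdx h z :=
  (hz.hasFDerivAt.comp_hasDerivAt z.2 ((hasDerivAt_const _ z.1).prodMk (hasDerivAt_id _))).deriv

theorem deriv_slice_fst {h : ℝ × ℝ → ℝ} {z : ℝ × ℝ} (hz : DifferentiableAt ℝ h z) :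
    deriv (fun s => h (s, z.2)) z.1 = pdt h z :=
  (hz.hasFDerivAt.comp_hasDerivAt z.1 ((hasDerivAt_id _).prodMk (hasDerivAt_const _ z.2))).deriv

def ParabolicLipschitz (h : ℝ × ℝ → ℝ) (L : ℝ) : Prop :=
  (∀ t ∈ Icc (0:ℝ) 1, ∀ a ∈ Icc (0:ℝ) 1, ∀ b ∈ Icc (0:ℝ) 1,
    |h (t, b) - h (t, a)| ≤ L * |b - a|) ∧
  (∀ x ∈ Icc (0:ℝ) 1, ∀ a ∈ Icc (0:ℝ) 1, ∀ b ∈ Icc (0:ℝ) 1,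
    |h (b, x) - h (a, x)| ≤ L ^ 2 / 2 * |b - a|)

namespace ParabolicLipschitz

variable {h : ℝ × ℝ → ℝ} {L : ℝ}

theorem le_add_x (hh : ParabolicLipschitz h L) {t a b : ℝ} (ht : t ∈ Icc (0:ℝ) 1)
    (ha : a ∈ Icc (0:ℝ) 1) (hb : b ∈ Icc (0:ℝ) 1) : h (t, b) ≤ h (t, a) + L * |b - a| := by
  linarith [le_abs_self (h (t, b) - h (t, a)), hh.1 t ht a ha b hb]

theorem le_add_t (hh : ParabolicLipschitz h L) {x a b : ℝ} (hx : x ∈ Icc (0:ℝ) 1)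
    (ha : a ∈ Icc (0:ℝ) 1) (hb : b ∈ Icc (0:ℝ) 1) :
    h (b, x) ≤ h (a, x) + L ^ 2 / 2 * |b - a| := by
  linarith [le_abs_self (h (b, x) - h (a, x)), hh.2 x hx a ha b hb]

theorem reflect (hh : ParabolicLipschitz h L) :
    ParabolicLipschitz (fun z => h (z.1, 1 - z.2)) L := by
  have hmem : ∀ {y : ℝ}, y ∈ Icc (0:ℝ) 1 → 1 - y ∈ Icc (0:ℝ) 1 := fun hy =>
    ⟨by linarith [hy.2], by linarith [hy.1]⟩
  refine ⟨fun t ht a ha b hb => ?_, fun x hx a ha b hb => hh.2 _ (hmem hx) a ha b hb⟩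
  simpa [abs_sub_comm] using hh.1 t ht _ (hmem ha) _ (hmem hb)

end ParabolicLipschitz

theorem parabolicLipschitz_of_ae_hamiltonJacobi {h : ℝ × ℝ → ℝ} {K : NNReal} {L : ℝ}
    (hLip : LipschitzOnWith K h (Icc 0 1 ×ˢ Icc 0 1))
    (heq : ∀ᵐ z ∂(volume.restrict Qunit),
      DifferentiableAt ℝ h z ∧ pdt h z + (pdx h z) ^ 2 / 2 = 0)
    (hdx : ∀ᵐ z ∂(volume.restrict Qunit), |pdx h z| ≤ L) :
    ParabolicLipschitz h L := by
  refine ⟨abs_sub_le_of_ae_abs_deriv_slice_le hLip ?_, ?_⟩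
  · filter_upwards [heq, hdx] with z hz hzL
    rwa [deriv_slice_snd hz.1]
  refine abs_sub_le_of_ae_abs_deriv_slice_le (f := fun z => h (z.2, z.1)) (K := K * max 1 1)
    (hLip.comp (LipschitzWith.prod_snd.prodMk LipschitzWith.prod_fst).lipschitzOnWith
      fun z hz => ⟨hz.2, hz.1⟩) ?_
  filter_upwards [ae_restrict_Qunit_swap heq, ae_restrict_Qunit_swap hdx] with z hz hzL
  change |deriv (fun s => h (s, z.swap.2)) z.swap.1| ≤ _
  rw [deriv_slice_fst hz.1, show pdt h z.swap = -(pdx h z.swap ^ 2 / 2) by linarith [hz.2],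
    abs_neg, abs_of_nonneg (by positivity), ← sq_abs]
  gcongr

def hopfLaxCost (h : ℝ × ℝ → ℝ) (z w : ℝ × ℝ) : ℝ :=
  h w + (z.2 - w.2) ^ 2 / (2 * (z.1 - w.1))

theorem parbQ_subset_Icc : parbQ ⊆ Icc 0 1 ×ˢ Icc 0 1 := by
  rintro ⟨s, y⟩ (⟨rfl, hy⟩ | ⟨hs, rfl | rfl⟩) <;>
    simp_all [mem_Icc, le_of_lt]

theorem Icc_subset_closure_parbQ : {0} ×ˢ Icc (0:ℝ) 1 ⊆ closure parbQ := by
  calc {0} ×ˢ Icc (0:ℝ) 1 = closure ({0} ×ˢ Ioo 0 1) := by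
        rw [closure_prod_eq, closure_singleton, closure_Ioo zero_ne_one]
    _ ⊆ closure parbQ := closure_mono subset_union_left

theorem reflect_mem_parbQ {w : ℝ × ℝ} (hw : w ∈ parbQ) : (w.1, 1 - w.2) ∈ parbQ := by
  rcases hw with ⟨hs, hy⟩ | ⟨hs, hy | hy⟩
  · exact Or.inl ⟨hs, by linarith [hy.2], by linarith [hy.1]⟩
  · exact Or.inr ⟨hs, by simp_all⟩
  · exact Or.inr ⟨hs, by simp_all⟩

theorem mul_le_sq_div_add (b L : ℝ) {τ : ℝ} (hτ : 0 < τ) :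
    L * b ≤ b ^ 2 / (2 * τ) + L ^ 2 * τ / 2 := by
  have : b ^ 2 / (2 * τ) + L ^ 2 * τ / 2 - L * b = (b - L * τ) ^ 2 / (2 * τ) := by
    field_simp; ring
  linarith [div_nonneg (sq_nonneg (b - L * τ)) (by positivity : (0:ℝ) ≤ 2 * τ)]

section HopfLax

variable {h : ℝ × ℝ → ℝ} {L : ℝ}

theorem bddBelow_hopfLaxCost (hcont : ContinuousOn h (Icc 0 1 ×ˢ Icc 0 1)) (z : ℝ × ℝ) :
    BddBelow {v | ∃ w ∈ parbQ, w.1 < z.1 ∧ v = hopfLaxCost h z w} := by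
  obtain ⟨m, hm⟩ := (isCompact_Icc.prod isCompact_Icc).bddBelow_image hcont
  refine ⟨m, ?_⟩
  rintro _ ⟨w, hw, hwt, rfl⟩
  have hmw : m ≤ h w := hm (mem_image_of_mem h (parbQ_subset_Icc hw))
  have hq : 0 ≤ (z.2 - w.2) ^ 2 / (2 * (z.1 - w.1)) :=
    div_nonneg (sq_nonneg _) (by linarith)
  unfold hopfLaxCost
  linarith

theorem hopfLax_le_hopfLaxCost (hcont : ContinuousOn h (Icc 0 1 ×ˢ Icc 0 1)) {z w : ℝ × ℝ}
    (hw : w ∈ closure parbQ) (hwz : w.1 < z.1) : hopfLax h z ≤ hopfLaxCost h z w := by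
  have hw' : w ∈ closure ({w | w.1 < z.1} ∩ parbQ) :=
    (isOpen_lt continuous_fst continuous_const).inter_closure ⟨hwz, hw⟩
  refine ContinuousWithinAt.closure_le hw' continuousWithinAt_const ?_ ?_
  · have hwQ : w ∈ Icc 0 1 ×ˢ Icc 0 1 :=
      closure_minimal parbQ_subset_Icc (isClosed_Icc.prod isClosed_Icc) hw
    refine ((hcont w hwQ).mono (inter_subset_right.trans parbQ_subset_Icc)).add
      (ContinuousAt.continuousWithinAt ?_)
    exact ((continuous_const.sub continuous_snd).pow 2).continuousAt.div
      (continuous_const.mul (continuous_const.sub continuous_fst)).continuousAt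
      (by linarith)
  · rintro w' ⟨hw'z, hw'⟩
    exact csInf_le (bddBelow_hopfLaxCost hcont z) ⟨w', hw', hw'z, rfl⟩

theorem le_hopfLax {z : ℝ × ℝ} {c : ℝ} (hz : 0 < z.1)
    (H : ∀ w ∈ parbQ, w.1 < z.1 → c ≤ hopfLaxCost h z w) : c ≤ hopfLax h z :=
  le_csInf ⟨_, (0, 1 / 2), Or.inl ⟨rfl, by norm_num, by norm_num⟩, hz, rfl⟩
    (by rintro _ ⟨w, hw, hwz, rfl⟩; exact H w hw hwz)

theorem hopfLax_le_hopfLaxCost_add_initial (hcont : ContinuousOn h (Icc 0 1 ×ˢ Icc 0 1))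
    (hh : ParabolicLipschitz h L) (hL : 0 ≤ L) {t x x' y : ℝ} (ht : 0 < t) (hx : 0 < x)
    (hxx : x ≤ x') (hy : y ∈ Icc (0:ℝ) 1) :
    hopfLax h (t, x) ≤ hopfLaxCost h (t, x') (0, y) + L * (x' - x) := by
  set y' := max (y - (x' - x)) 0
  have hy' : y' ∈ Icc (0:ℝ) 1 := ⟨le_max_right _ _, max_le (by linarith [hy.2]) zero_le_one⟩
  have hshift : |y' - y| ≤ x' - x := by
    rw [abs_le]; constructor <;> cases max_cases (y - (x' - x)) 0 <;> linarith [hy.1]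
  have hsq : (x - y') ^ 2 ≤ (x' - y) ^ 2 := by
    rcases max_cases (y - (x' - x)) 0 with ⟨hmax, -⟩ | ⟨hmax, hlt⟩
    · rw [show y' = y - (x' - x) from hmax]; ring_nf; rfl
    · rw [show y' = 0 from hmax]; exact pow_le_pow_left₀ (by linarith) (by linarith) 2
  calc hopfLax h (t, x) ≤ hopfLaxCost h (t, x) (0, y') :=
        hopfLax_le_hopfLaxCost hcont (Icc_subset_closure_parbQ ⟨rfl, hy'⟩) ht
    _ ≤ h (0, y) + L * |y' - y| + (x' - y) ^ 2 / (2 * (t - 0)) := by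
        unfold hopfLaxCost
        gcongr
        exact hh.le_add_x ⟨le_rfl, zero_le_one⟩ hy hy'
    _ ≤ hopfLaxCost h (t, x') (0, y) + L * (x' - x) := by
        unfold hopfLaxCost
        nlinarith [mul_le_mul_of_nonneg_left hshift hL]

theorem hopfLax_le_hopfLaxCost_add_bottom (hcont : ContinuousOn h (Icc 0 1 ×ˢ Icc 0 1))
    (hL : 0 ≤ L) {t x x' s : ℝ} (hx : 0 < x) (hxx : x ≤ x') (hs : (s, 0) ∈ parbQ) (hst : s < t) :
    hopfLax h (t, x) ≤ hopfLaxCost h (t, x') (s, 0) + L * (x' - x) := by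
  calc hopfLax h (t, x) ≤ hopfLaxCost h (t, x) (s, 0) :=
        hopfLax_le_hopfLaxCost hcont (subset_closure hs) hst
    _ ≤ hopfLaxCost h (t, x') (s, 0) := by
        unfold hopfLaxCost
        gcongr
    _ ≤ hopfLaxCost h (t, x') (s, 0) + L * (x' - x) :=
        le_add_of_nonneg_right (mul_nonneg hL (by linarith))

theorem hopfLax_le_of_characteristic (hcont : ContinuousOn h (Icc 0 1 ×ˢ Icc 0 1))
    (hh : ParabolicLipschitz h L) {t x s s' y' : ℝ} (hs : s ∈ Icc (0:ℝ) 1) (hs's : s' ≤ s) (hs't : s' < t) (hw : (s', y') ∈ closure parbQ)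
    (hy' : y' - x = L * (t - s')) :
    hopfLax h (t, x) ≤ h (s, 1) + L * (1 - x) - L ^ 2 * (t - s) / 2 := by
  have hwQ : (s', y') ∈ Icc (0:ℝ) 1 ×ˢ Icc (0:ℝ) 1 :=
    closure_minimal parbQ_subset_Icc (isClosed_Icc.prod isClosed_Icc) hw
  have hs'I : s' ∈ Icc (0:ℝ) 1 := hwQ.1
  have hwall : h (s', y') ≤ h (s', 1) + L * (1 - y') := by
    simpa [abs_of_nonpos (sub_nonpos.2 hwQ.2.2)] using
      hh.le_add_x hs'I ⟨zero_le_one, le_rfl⟩ hwQ.2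
  have htime : h (s', 1) ≤ h (s, 1) + L ^ 2 / 2 * (s - s') := by
    simpa [abs_of_nonpos (sub_nonpos.2 hs's)] using
      hh.le_add_t ⟨zero_le_one, le_rfl⟩ hs hs'I
  have hcost : hopfLaxCost h (t, x) (s', y') = h (s', y') + L ^ 2 * (t - s') / 2 := by
    unfold hopfLaxCost
    rw [show (x - y') ^ 2 = (L * (t - s')) ^ 2 by rw [← hy']; ring]
    field_simp [(sub_pos.2 hs't).ne']
  calc hopfLax h (t, x) ≤ hopfLaxCost h (t, x) (s', y') := hopfLax_le_hopfLaxCost hcont hw hs't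
    _ ≤ _ := by
      have : L * (1 - y') = L * (1 - x) - L ^ 2 * (t - s') := by
        rw [show y' = x + L * (t - s') by linarith]; ring
      rw [hcost]; linarith

theorem hopfLax_le_hopfLaxCost_add_top (hcont : ContinuousOn h (Icc 0 1 ×ˢ Icc 0 1))
    (hh : ParabolicLipschitz h L) (hL : 0 ≤ L) {t x x' s : ℝ} (ht : 0 < t) (hx : 0 < x)
    (hxx : x ≤ x') (hx' : x' < 1) (hs : s ∈ Ioo (0:ℝ) 1) (hst : s < t) :
    hopfLax h (t, x) ≤ hopfLaxCost h (t, x') (s, 1) + L * (x' - x) := by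
  have hτ : 0 < t - s := sub_pos.2 hst
  have hsI : s ∈ Icc (0:ℝ) 1 := Ioo_subset_Icc_self hs
  have hamgm := mul_le_sq_div_add (1 - x') L hτ
  rcases le_or_gt (1 - x) (L * (t - s)) with hnear | hfar
  · calc hopfLax h (t, x) ≤ hopfLaxCost h (t, x) (s, 1) :=
          hopfLax_le_hopfLaxCost hcont (subset_closure (Or.inr ⟨hs, Or.inr rfl⟩)) hst
      _ ≤ hopfLaxCost h (t, x') (s, 1) + L * (x' - x) := by
          unfold hopfLaxCost
          dsimp only
          rw [add_assoc, div_add' _ _ _ (by positivity)]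
          gcongr
          nlinarith [mul_le_mul_of_nonneg_right hnear (sub_nonneg.2 hxx)]
  suffices hopfLax h (t, x) ≤ h (s, 1) + L * (1 - x) - L ^ 2 * (t - s) / 2 by
    unfold hopfLaxCost; dsimp only; rw [show (x' - 1) ^ 2 = (1 - x') ^ 2 by ring]; linarith
  rcases lt_or_ge (1 - x) (L * t) with hwall | hinit
  · have hLpos : 0 < L := by
      by_contra hL0
      nlinarith
    have hs' : 0 < t - (1 - x) / L := by
      rw [sub_pos, div_lt_iff₀ hLpos]; linarith
    have hs's : t - (1 - x) / L < s := by
      rw [sub_lt_comm, lt_div_iff₀ hLpos]; linarith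
    refine hopfLax_le_of_characteristic hcont hh hsI hs's.le ?_
      (subset_closure (Or.inr ⟨⟨hs', hs's.trans hs.2⟩, Or.inr rfl⟩)) ?_
    · linarith [div_pos (by linarith : (0:ℝ) < 1 - x) hLpos]
    · field_simp; ring
  · refine hopfLax_le_of_characteristic (y' := x + L * t) hcont hh hsI hs.1.le ht
      (Icc_subset_closure_parbQ ⟨rfl, ?_, ?_⟩) (by ring)
    · nlinarith
    · linarith

theorem hopfLax_le_hopfLax_add (hcont : ContinuousOn h (Icc 0 1 ×ˢ Icc 0 1))
    (hh : ParabolicLipschitz h L) (hL : 0 ≤ L) {t x x' : ℝ} (ht : 0 < t) (hx : 0 < x)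
    (hxx : x ≤ x') (hx' : x' < 1) :
    hopfLax h (t, x) ≤ hopfLax h (t, x') + L * (x' - x) := by
  rw [← sub_le_iff_le_add]
  refine le_hopfLax ht fun w hw hwt => sub_le_iff_le_add.2 ?_
  obtain ⟨s, y⟩ := w
  rcases hw with ⟨rfl, hy⟩ | ⟨hs, rfl | rfl⟩
  · exact hopfLax_le_hopfLaxCost_add_initial hcont hh hL ht hx hxx (Ioo_subset_Icc_self hy)
  · exact hopfLax_le_hopfLaxCost_add_bottom hcont hL hx hxx (Or.inr ⟨hs, Or.inl rfl⟩) hwt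
  · exact hopfLax_le_hopfLaxCost_add_top hcont hh hL ht hx hxx hx' hs hwt

theorem hopfLax_reflect (t x : ℝ) :
    hopfLax (fun z => h (z.1, 1 - z.2)) (t, 1 - x) = hopfLax h (t, x) := by
  unfold hopfLax
  congr 1
  ext v
  constructor
  · rintro ⟨w, hw, hwt, rfl⟩
    refine ⟨(w.1, 1 - w.2), reflect_mem_parbQ hw, hwt, ?_⟩
    ring_nf
  · rintro ⟨w, hw, hwt, rfl⟩
    refine ⟨(w.1, 1 - w.2), reflect_mem_parbQ hw, hwt, ?_⟩
    ring_nf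

theorem abs_hopfLax_sub_le (hcont : ContinuousOn h (Icc 0 1 ×ˢ Icc 0 1))
    (hh : ParabolicLipschitz h L) (hL : 0 ≤ L) {t x x' : ℝ} (ht : 0 < t)
    (hx : x ∈ Ioo (0:ℝ) 1) (hx' : x' ∈ Ioo (0:ℝ) 1) :
    |hopfLax h (t, x) - hopfLax h (t, x')| ≤ L * |x - x'| := by
  wlog hxx : x ≤ x' generalizing x x'
  · rw [abs_sub_comm, abs_sub_comm x]
    exact this hx' hx (le_of_not_ge hxx)
  have hcont' : ContinuousOn (fun z : ℝ × ℝ => h (z.1, 1 - z.2)) (Icc 0 1 ×ˢ Icc 0 1) :=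
    hcont.comp (by fun_prop) fun z hz => ⟨hz.1, by linarith [hz.2.2], by linarith [hz.2.1]⟩
  have hright := hopfLax_le_hopfLax_add hcont hh hL ht hx.1 hxx hx'.2
  have hleft := hopfLax_le_hopfLax_add hcont' hh.reflect hL ht (by linarith [hx'.2])
    (by linarith : 1 - x' ≤ 1 - x) (by linarith [hx.1])
  rw [hopfLax_reflect, hopfLax_reflect] at hleft
  rw [abs_sub_le_iff, abs_of_nonpos (by linarith)]
  constructor <;> linarith

end HopfLax

/-- **Lipschitz bound in `x` for the Hopf–Lax solution**: if `h` is Lipschitz, solves the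
Hamilton–Jacobi equation a.e. in `Q` and `L = ‖∂ₓ h‖_{L^∞(Q)}`, then `x ↦ h̄(t,x)` is
`L`-Lipschitz for every `t ∈ (0,1)`. -/
theorem stmt16 (h : ℝ × ℝ → ℝ) (Kh : NNReal) (L : ℝ) (hL : 0 ≤ L)
    (hLip : LipschitzOnWith Kh h (Icc 0 1 ×ˢ Icc 0 1))
    (heq : ∀ᵐ z ∂(volume.restrict Qunit),
      DifferentiableAt ℝ h z ∧ pdt h z + (pdx h z) ^ 2 / 2 = 0)
    (hdx : ∀ᵐ z ∂(volume.restrict Qunit), |pdx h z| ≤ L) :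
    ∀ t ∈ Ioo (0:ℝ) 1, ∀ x ∈ Ioo (0:ℝ) 1, ∀ x' ∈ Ioo (0:ℝ) 1,
      |hopfLax h (t, x) - hopfLax h (t, x')| ≤ L * |x - x'| := by
  intro t ht x hx x' hx'
  exact abs_hopfLax_sub_le hLip.continuousOn (parabolicLipschitz_of_ae_hamiltonJacobi hLip heq hdx)
    hL ht.1 hx hx'
end
end
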